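/- arXiv:2309.10143 — 5 statements merged into one kernel-verified Lean document; each statement's English description precedes it below -/
import Mathlib

section
/- Let X be a set, Ω a domain on X, and K_Ω : Ω → ℝ any function. Then the set 𝒞(K_Ω) of completions of K_Ω, regarded as a subset of the space of all functions X × X → ℝ, is convex, and it is compact in the topology of pointwise convergence (the product topology on X × X → ℝ). -/
/-- A reproducing kernel on a set `X`. -/
def IsKernel {X : Type*} (K : X → X → ℝ) : Prop :=
  (∀ x y, K x y = K y x) ∧
  ∀ (n : ℕ) (α : Fin n → ℝ) (x : Fin n → X),
    0 ≤ ∑ i, ∑ j, α i * α j * K (x i) (x j)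

/-- A domain on `X`: a symmetric subset of `X × X` containing the diagonal. -/
def IsCompletionDomain {X : Type*} (Ω : Set (X × X)) : Prop :=
  (∀ x y, (x, y) ∈ Ω ↔ (y, x) ∈ Ω) ∧ ∀ x, (x, x) ∈ Ω

/-- The set of completions of `KΩ`, as a subset of the space of functions `X × X → ℝ`. -/
def completionSet {X : Type*} (Ω : Set (X × X)) (KΩ : X → X → ℝ) :
    Set (X × X → ℝ) :=
  {K | IsKernel (fun x y => K (x, y)) ∧ ∀ p ∈ Ω, K p = KΩ p.1 p.2}

/-! The defining conditions of a completion — symmetry, nonnegativity of each quadratic form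
`∑ αᵢ αⱼ K(xᵢ, xⱼ)` and prescribed values on `Ω` — are each preserved by convex combinations and
each cut out a closed set for pointwise convergence. Testing positivity on two points gives
`|K(x, y)| ≤ (K(x, x) + K(y, y)) / 2`, and the diagonal lies in `Ω`, so all completions lie in a
fixed product of compact intervals; Tychonoff finishes the proof. -/

namespace IsKernel

variable {X : Type*} {K L : X → X → ℝ}

theorem add (hK : IsKernel K) (hL : IsKernel L) : IsKernel (K + L) := by
  refine ⟨fun x y => by simp only [Pi.add_apply, hK.1 x y, hL.1 x y], fun n α x => ?_⟩
  have hsplit : ∑ i, ∑ j, α i * α j * (K + L) (x i) (x j)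
      = ∑ i, ∑ j, α i * α j * K (x i) (x j) + ∑ i, ∑ j, α i * α j * L (x i) (x j) := by
    simp only [Pi.add_apply, mul_add, Finset.sum_add_distrib]
  rw [hsplit]
  exact add_nonneg (hK.2 n α x) (hL.2 n α x)

theorem smul (hK : IsKernel K) {c : ℝ} (hc : 0 ≤ c) : IsKernel (c • K) := by
  refine ⟨fun x y => by simp only [Pi.smul_apply, hK.1 x y], fun n α x => ?_⟩
  have hfactor : ∑ i, ∑ j, α i * α j * (c • K) (x i) (x j)
      = c * ∑ i, ∑ j, α i * α j * K (x i) (x j) := by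
    simp only [Pi.smul_apply, smul_eq_mul, Finset.mul_sum]
    exact Finset.sum_congr rfl fun i _ => Finset.sum_congr rfl fun j _ => by ring
  rw [hfactor]
  exact mul_nonneg hc (hK.2 n α x)

theorem abs_le (hK : IsKernel K) (x y : X) : |K x y| ≤ (K x x + K y y) / 2 := by
  have hminus := hK.2 2 ![1, -1] ![x, y]
  have hplus := hK.2 2 ![1, 1] ![x, y]
  simp only [Fin.sum_univ_two, Matrix.cons_val_zero, Matrix.cons_val_one, hK.1 y x] at hminus hplus
  rw [_root_.abs_le]
  constructor <;> linarith

end IsKernel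

section Completions

variable {X : Type*}

theorem convex_setOf_isKernel : Convex ℝ {K : X × X → ℝ | IsKernel fun x y => K (x, y)} :=
  fun _ hK _ hL _ _ ha hb _ => (hK.smul ha).add (hL.smul hb)

theorem isClosed_setOf_isKernel : IsClosed {K : X × X → ℝ | IsKernel fun x y => K (x, y)} := by
  simp only [IsKernel, Set.ofPred_and, Set.ofPred_forall]
  refine .inter (isClosed_iInter fun x => isClosed_iInter fun y =>
    isClosed_eq (continuous_apply _) (continuous_apply _)) ?_
  refine isClosed_iInter fun n => isClosed_iInter fun α => isClosed_iInter fun x => ?_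
  exact isClosed_le continuous_const <| continuous_finsetSum _ fun i _ =>
    continuous_finsetSum _ fun j _ => continuous_const.mul (continuous_apply _)

theorem convex_setOf_eqOn (Ω : Set (X × X)) (KΩ : X → X → ℝ) :
    Convex ℝ {K : X × X → ℝ | ∀ p ∈ Ω, K p = KΩ p.1 p.2} := by
  intro K hK L hL a b _ _ hab p hp
  simp only [Pi.add_apply, Pi.smul_apply, smul_eq_mul, hK p hp, hL p hp, ← add_mul, hab, one_mul]

theorem isClosed_setOf_eqOn (Ω : Set (X × X)) (KΩ : X → X → ℝ) :
    IsClosed {K : X × X → ℝ | ∀ p ∈ Ω, K p = KΩ p.1 p.2} := by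
  simp only [Set.ofPred_forall]
  exact isClosed_biInter fun p _ => isClosed_eq (continuous_apply p) continuous_const

theorem abs_le_of_mem_completionSet {Ω : Set (X × X)} (hΩ : IsCompletionDomain Ω)
    {KΩ : X → X → ℝ} {K : X × X → ℝ} (hK : K ∈ completionSet Ω KΩ) (p : X × X) :
    |K p| ≤ (KΩ p.1 p.1 + KΩ p.2 p.2) / 2 := by
  have h := hK.1.abs_le p.1 p.2
  rwa [hK.2 _ (hΩ.2 p.1), hK.2 _ (hΩ.2 p.2)] at h

end Completions

/-- The set of completions is convex and compact in the topology of pointwise convergence. -/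
theorem completionSet_convex_and_isCompact {X : Type*} (Ω : Set (X × X))
    (hΩ : IsCompletionDomain Ω) (KΩ : X → X → ℝ) :
    Convex ℝ (completionSet Ω KΩ) ∧ IsCompact (completionSet Ω KΩ) := by
  refine ⟨convex_setOf_isKernel.inter (convex_setOf_eqOn Ω KΩ), ?_⟩
  let bound : X × X → ℝ := fun p => (KΩ p.1 p.1 + KΩ p.2 p.2) / 2
  have hbox : IsCompact (Set.univ.pi fun p => Set.Icc (-bound p) (bound p)) :=
    isCompact_univ_pi fun _ => isCompact_Icc
  refine hbox.of_isClosed_subset (isClosed_setOf_isKernel.inter (isClosed_setOf_eqOn Ω KΩ)) ?_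
  intro K hK p _
  exact abs_le.mp (abs_le_of_mem_completionSet hΩ hK p)
end

section
/- Let K be a reproducing kernel on a set X and (H, φ) a realization of K. Then for a function G : X × X → ℝ, both K + G and K − G are reproducing kernels on X if and only if there exists a self-adjoint continuous linear operator Ψ : H → H with operator norm ‖Ψ‖ ≤ 1 such that G(x,y) = ⟪Ψ(φ x), φ y⟫ for all x,y ∈ X; moreover such Ψ is unique, so this assignment is a bijective correspondence between such functions G and self-adjoint contractions on H. -/
open scoped RealInnerProductSpace

/-!
Let `P α = ∑ₓ α x • φ x` map finitely supported coefficient vectors onto the dense span of `φ`.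
Then `K` is the quadratic form `‖P α‖²`, so `K ± G` are kernels exactly when `G` is symmetric
and its Gram form `G[α, β] = ∑ α x β y G x y` (`kernelForm`) satisfies `|G[α, α]| ≤ ‖P α‖²`.
Polarization and the parallelogram law upgrade this to `|G[α, β]| ≤ ‖P α‖ ‖P β‖`; hence `G[·, ·]`
descends to the range of `P`, extends by continuity to `H`, and the Riesz representation theorem
turns it into a contraction `Ψ` with `⟪Ψ (P α), P β⟫ = G[α, β]`. Symmetry and uniqueness of `Ψ`
follow from density of the range of `P`.
-/

open Finsupp

section kernelForm

variable {X R : Type*} [CommSemiring R]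

noncomputable def kernelForm (F : X → X → R) : (X →₀ R) →ₗ[R] (X →₀ R) →ₗ[R] R :=
  linearCombination R fun x => linearCombination R (F x)

@[simp]
theorem kernelForm_single (F : X → X → R) (x y : X) (a b : R) :
    kernelForm F (single x a) (single y b) = a * b * F x y := by
  simp [kernelForm, mul_assoc]

theorem kernelForm_apply (F : X → X → R) (α β : X →₀ R) :
    kernelForm F α β = ∑ x ∈ α.support, ∑ y ∈ β.support, α x * β y * F x y := by
  conv_lhs => rw [← α.sum_single, ← β.sum_single]
  simp only [Finsupp.sum, map_sum, LinearMap.coe_sum, Finset.sum_apply, kernelForm_single]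
  exact Finset.sum_comm

theorem kernelForm_eq_compl₁₂ {N : Type*} [AddCommMonoid N] [Module R N] {F : X → X → R}
    {φ : X → N} {b : N →ₗ[R] N →ₗ[R] R} (h : ∀ x y, F x y = b (φ x) (φ y)) :
    kernelForm F = b.compl₁₂ (linearCombination R φ) (linearCombination R φ) :=
  lhom_ext fun x a => lhom_ext fun y c => by simp [h, mul_assoc, mul_left_comm]

theorem kernelForm_comm {F : X → X → R} (hF : ∀ x y, F x y = F y x) (α β : X →₀ R) :
    kernelForm F α β = kernelForm F β α := by
  have : kernelForm F = (kernelForm F).flip :=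
    lhom_ext fun x a => lhom_ext fun y b => by simp [hF x y, mul_comm a b]
  conv_lhs => rw [this]
  rfl

theorem kernelForm_add (F F' : X → X → R) :
    kernelForm (fun x y => F x y + F' x y) = kernelForm F + kernelForm F' :=
  lhom_ext fun x a => lhom_ext fun y b => by simp [mul_add]

end kernelForm

theorem kernelForm_sub {X R : Type*} [CommRing R] (F F' : X → X → R) :
    kernelForm (fun x y => F x y - F' x y) = kernelForm F - kernelForm F' :=
  lhom_ext fun x a => lhom_ext fun y b => by simp [mul_sub]

theorem sum_sum_nonneg_of_fin {X : Type*} {F : X → X → ℝ}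
    (hF : ∀ (n : ℕ) (a : Fin n → ℝ) (x : Fin n → X), 0 ≤ ∑ i, ∑ j, a i * a j * F (x i) (x j))
    {ι : Type*} [Fintype ι] (a : ι → ℝ) (x : ι → X) :
    0 ≤ ∑ i, ∑ j, a i * a j * F (x i) (x j) := by
  let e := (Fintype.equivFin ι).symm
  convert hF _ (a ∘ e) (x ∘ e) using 1
  rw [← e.sum_comp]
  refine Finset.sum_congr rfl fun i _ => ?_
  rw [← e.sum_comp]
  rfl

theorem isKernel_iff {X : Type*} {F : X → X → ℝ} :
    IsKernel F ↔ (∀ x y, F x y = F y x) ∧ ∀ γ, 0 ≤ kernelForm F γ γ := by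
  refine and_congr_right' ⟨fun hF γ => ?_, fun hF n a x => ?_⟩
  · rw [kernelForm_apply, ← Finset.sum_coe_sort γ.support]
    simp_rw [← Finset.sum_coe_sort γ.support]
    exact sum_sum_nonneg_of_fin (ι := γ.support) hF (fun i => γ i) (↑)
  · convert hF (∑ i, single (x i) (a i)) using 1
    simp only [map_sum, LinearMap.coe_sum, Finset.sum_apply, kernelForm_single]
    exact Finset.sum_comm

theorem isKernel_add_and_isKernel_sub_iff {X : Type*} {K G : X → X → ℝ}
    (hK : ∀ x y, K x y = K y x) :
    IsKernel (fun x y => K x y + G x y) ∧ IsKernel (fun x y => K x y - G x y) ↔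
      (∀ x y, G x y = G y x) ∧ ∀ γ, |kernelForm G γ γ| ≤ kernelForm K γ γ := by
  simp only [isKernel_iff, kernelForm_add, kernelForm_sub, LinearMap.add_apply,
    LinearMap.sub_apply, abs_le]
  constructor
  · rintro ⟨⟨hsym, hadd⟩, -, hsub⟩
    exact ⟨fun x y => by linarith [hsym x y, hK x y],
      fun γ => ⟨by linarith [hadd γ], by linarith [hsub γ]⟩⟩
  · rintro ⟨hGsym, hGK⟩
    exact ⟨⟨fun x y => by rw [hK, hGsym], fun γ => by linarith [hGK γ]⟩,
      ⟨fun x y => by rw [hK, hGsym], fun γ => by linarith [hGK γ]⟩⟩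

open Filter Topology in
theorem le_mul_of_forall_pos_two_mul_le {x a b : ℝ} (ha : 0 ≤ a) (hb : 0 ≤ b)
    (h : ∀ t > 0, 2 * x ≤ t * a ^ 2 + b ^ 2 / t) : x ≤ a * b := by
  -- the optimal `t = b / a` degenerates when `a = 0`; shifting both by `δ` avoids the case split
  have hδ : ∀ δ > 0, x ≤ (a + δ) * (b + δ) := by
    intro δ hδ
    have ha' : 0 < a + δ := by positivity
    have hb' : 0 < b + δ := by positivity
    have ht := h ((b + δ) / (a + δ)) (by positivity)
    have hta : (b + δ) / (a + δ) * a ^ 2 ≤ (b + δ) / (a + δ) * (a + δ) ^ 2 := by gcongr; linarith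
    have htb : b ^ 2 / ((b + δ) / (a + δ)) ≤ (b + δ) ^ 2 / ((b + δ) / (a + δ)) := by
      gcongr; linarith
    have hsum : (b + δ) / (a + δ) * (a + δ) ^ 2 + (b + δ) ^ 2 / ((b + δ) / (a + δ)) =
        2 * ((a + δ) * (b + δ)) := by
      field_simp
      ring
    linarith
  have hlim : Tendsto (fun δ => (a + δ) * (b + δ)) (𝓝[>] 0) (𝓝 (a * b)) := by
    have hcont : Continuous fun δ : ℝ => (a + δ) * (b + δ) := by fun_prop
    simpa using (hcont.tendsto 0).mono_left nhdsWithin_le_nhds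
  exact ge_of_tendsto hlim (eventually_nhdsWithin_of_forall hδ)

theorem LinearMap.abs_apply_le_of_abs_apply_self_le {M E : Type*} [AddCommGroup M] [Module ℝ M]
    [NormedAddCommGroup E] [InnerProductSpace ℝ E] (B : M →ₗ[ℝ] M →ₗ[ℝ] ℝ)
    (hB : ∀ m n, B m n = B n m) (P : M →ₗ[ℝ] E) (h : ∀ m, |B m m| ≤ ‖P m‖ ^ 2) (m n : M) :
    |B m n| ≤ ‖P m‖ * ‖P n‖ := by
  have hpolar : ∀ m n, 2 * |B m n| ≤ ‖P m‖ ^ 2 + ‖P n‖ ^ 2 := by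
    intro m n
    have h4 : 4 * B m n = B (m + n) (m + n) - B (m - n) (m - n) := by
      simp only [map_add, map_sub, LinearMap.add_apply, LinearMap.sub_apply, hB n m]
      ring
    have hpar : ‖P (m + n)‖ ^ 2 + ‖P (m - n)‖ ^ 2 = 2 * (‖P m‖ ^ 2 + ‖P n‖ ^ 2) := by
      rw [map_add, map_sub]
      exact parallelogram_law_with_norm ℝ (P m) (P n)
    have hadd := abs_le.1 (h (m + n))
    have hsub := abs_le.1 (h (m - n))
    rw [← abs_two, ← abs_mul, abs_le]
    constructor <;> linarith
  refine le_mul_of_forall_pos_two_mul_le (norm_nonneg _) (norm_nonneg _) fun t ht => ?_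
  have hs : √t ≠ 0 := (Real.sqrt_pos.2 ht).ne'
  calc 2 * |B m n| = 2 * |B (√t • m) ((√t)⁻¹ • n)| := by
        simp only [map_smul, LinearMap.smul_apply, smul_eq_mul, inv_mul_cancel_left₀ hs]
    _ ≤ ‖P (√t • m)‖ ^ 2 + ‖P ((√t)⁻¹ • n)‖ ^ 2 := hpolar _ _
    _ = t * ‖P m‖ ^ 2 + ‖P n‖ ^ 2 / t := by
        simp only [map_smul, norm_smul, mul_pow, Real.norm_eq_abs, sq_abs, inv_pow,
          Real.sq_sqrt ht.le, div_eq_inv_mul]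

section Hilbert

variable {M H : Type*} [AddCommGroup M] [Module ℝ M]
  [NormedAddCommGroup H] [InnerProductSpace ℝ H]

theorem exists_continuousLinearMap_inner_eq [CompleteSpace H] {P : M →ₗ[ℝ] H}
    (hP : DenseRange P) (B : M →ₗ[ℝ] M →ₗ[ℝ] ℝ) {C : ℝ} (hC : 0 ≤ C)
    (hB : ∀ m n, |B m n| ≤ C * ‖P m‖ * ‖P n‖) :
    ∃ Ψ : H →L[ℝ] H, ‖Ψ‖ ≤ C ∧ ∀ m n, ⟪Ψ (P m), P n⟫ = B m n := by
  have hrepr : ∀ m, ∃ v : H, ‖v‖ ≤ C * ‖P m‖ ∧ ∀ n, ⟪v, P n⟫ = B m n := by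
    intro m
    have hBm : ∀ n, ‖B m n‖ ≤ C * ‖P m‖ * ‖P n‖ := hB m
    refine ⟨(InnerProductSpace.toDual ℝ H).symm ((B m).extendOfNorm P), ?_, fun n => ?_⟩
    · rw [LinearIsometryEquiv.norm_map]
      exact LinearMap.opNorm_extendOfNorm_le hP (by positivity) hBm
    · rw [InnerProductSpace.toDual_symm_apply, LinearMap.extendOfNorm_eq hP ⟨_, hBm⟩]
  choose v hv_norm hv_inner using hrepr
  let V : M →ₗ[ℝ] H :=
    { toFun := v
      map_add' := fun m m' => hP.eq_of_inner_left ℝ fun n => by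
        simp only [inner_add_left, hv_inner, map_add, LinearMap.add_apply]
      map_smul' := fun c m => hP.eq_of_inner_left ℝ fun n => by
        simp only [real_inner_smul_left, hv_inner, map_smul, LinearMap.smul_apply, smul_eq_mul,
          RingHom.id_apply] }
  refine ⟨V.extendOfNorm P, LinearMap.opNorm_extendOfNorm_le hP hC hv_norm, fun m n => ?_⟩
  rw [LinearMap.extendOfNorm_eq hP ⟨C, hv_norm⟩]
  exact hv_inner m n

theorem ContinuousLinearMap.isSymmetric_of_denseRange {ι : Type*} {f : ι → H} (hf : DenseRange f)
    (Ψ : H →L[ℝ] H) (h : ∀ i j, ⟪Ψ (f i), f j⟫ = ⟪f i, Ψ (f j)⟫) :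
    (Ψ : H →ₗ[ℝ] H).IsSymmetric := fun x y =>
  congrFun ((hf.prodMap hf).equalizer (g := fun p : H × H => ⟪Ψ p.1, p.2⟫)
    (h := fun p : H × H => ⟪p.1, Ψ p.2⟫)
    (by fun_prop) (by fun_prop) (funext fun p => h p.1 p.2)) (x, y)

theorem ContinuousLinearMap.ext_inner_denseRange {ι : Type*} {f : ι → H} (hf : DenseRange f)
    {Ψ Ψ' : H →L[ℝ] H} (h : ∀ i j, ⟪Ψ (f i), f j⟫ = ⟪Ψ' (f i), f j⟫) : Ψ = Ψ' :=
  DFunLike.coe_injective <| hf.equalizer Ψ.continuous Ψ'.continuous <|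
    funext fun i => hf.eq_of_inner_left ℝ (h i)

theorem kernelForm_eq_inner_map {X : Type*} {F : X → X → ℝ} {φ : X → H} (Ψ : H →L[ℝ] H)
    (h : ∀ x y, F x y = ⟪Ψ (φ x), φ y⟫) (α β : X →₀ ℝ) :
    kernelForm F α β = ⟪Ψ (linearCombination ℝ φ α), linearCombination ℝ φ β⟫ := by
  rw [kernelForm_eq_compl₁₂ (b := innerₗ H ∘ₗ (Ψ : H →ₗ[ℝ] H)) h]
  rfl

theorem abs_inner_map_self_le (Ψ : H →L[ℝ] H) (v : H) : |⟪Ψ v, v⟫| ≤ ‖Ψ‖ * ‖v‖ ^ 2 :=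
  calc |⟪Ψ v, v⟫| ≤ ‖Ψ v‖ * ‖v‖ := abs_real_inner_le_norm _ _
    _ ≤ ‖Ψ‖ * ‖v‖ * ‖v‖ := by gcongr; exact Ψ.le_opNorm v
    _ = ‖Ψ‖ * ‖v‖ ^ 2 := by ring

end Hilbert

/-- For a reproducing kernel `K` with realization `(H, φ)`, a function `G` is such that
both `K + G` and `K - G` are reproducing kernels iff `G(x,y) = ⟪Ψ (φ x), φ y⟫` for a unique
self-adjoint contraction `Ψ` on `H`. -/
theorem pm_selfAdjoint_contraction_correspondence {X H : Type*}
    [NormedAddCommGroup H] [InnerProductSpace ℝ H] [CompleteSpace H]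
    (K : X → X → ℝ) (hK : IsKernel K) (φ : X → H)
    (hφ : ∀ s t, ⟪φ s, φ t⟫ = K s t)
    (hdense : Dense (Submodule.span ℝ (Set.range φ) : Set H))
    (G : X → X → ℝ) :
    (IsKernel (fun x y => K x y + G x y) ∧ IsKernel (fun x y => K x y - G x y)) ↔
      (∃! Ψ : H →L[ℝ] H,
        (∀ f g : H, ⟪Ψ f, g⟫ = ⟪f, Ψ g⟫) ∧ ‖Ψ‖ ≤ 1 ∧
          ∀ x y, G x y = ⟪Ψ (φ x), φ y⟫) := by
  rw [isKernel_add_and_isKernel_sub_iff hK.1]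
  set P := linearCombination ℝ φ
  have hP : DenseRange P := by
    rwa [DenseRange, ← LinearMap.coe_range, range_linearCombination]
  have hKP : ∀ γ, kernelForm K γ γ = ‖P γ‖ ^ 2 := fun γ =>
    (kernelForm_eq_inner_map (.id ℝ H) (fun x y => (hφ x y).symm) γ γ).trans
      (real_inner_self_eq_norm_sq _)
  simp only [hKP]
  constructor
  · rintro ⟨hGsym, hGK⟩
    obtain ⟨Ψ, hΨnorm, hΨ⟩ := exists_continuousLinearMap_inner_eq hP (kernelForm G) zero_le_one
      fun α β => by
        simpa only [one_mul] using (kernelForm G).abs_apply_le_of_abs_apply_self_le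
          (kernelForm_comm hGsym) P hGK α β
    have hG : ∀ x y, G x y = ⟪Ψ (φ x), φ y⟫ := fun x y => by
      simpa [P] using (hΨ (single x 1) (single y 1)).symm
    refine ⟨Ψ, ⟨Ψ.isSymmetric_of_denseRange hP fun α β => ?_, hΨnorm, hG⟩, ?_⟩
    · rw [hΨ, kernelForm_comm hGsym, ← hΨ, real_inner_comm]
    · rintro Ψ' ⟨-, -, hG'⟩
      exact ContinuousLinearMap.ext_inner_denseRange hP fun α β => by
        rw [← kernelForm_eq_inner_map Ψ' hG', hΨ]
  · rintro ⟨Ψ, ⟨hΨsym, hΨnorm, hG⟩, -⟩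
    refine ⟨fun x y => by rw [hG, hG, hΨsym, real_inner_comm], fun γ => ?_⟩
    rw [kernelForm_eq_inner_map Ψ hG]
    exact (abs_inner_map_self_le Ψ _).trans (mul_le_of_le_one_left (by positivity) hΨnorm)
end

section
/- Let X be a set, Ω a domain on X, and K_Ω : Ω → ℝ symmetric (K_Ω(x,y) = K_Ω(y,x) for all (x,y) ∈ Ω). Then K_Ω admits a completion if and only if for every n ≥ 1, every x_1,…,x_n ∈ X, and every real symmetric positive-semidefinite n × n matrix M = [m_{ij}] such that m_{ij} = 0 whenever (x_i, x_j) ∉ Ω, one has ∑_{(i,j) : (x_i,x_j) ∈ Ω} m_{ij} K_Ω(x_i, x_j) ≥ 0. -/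
/-- `K` is a completion of `KΩ` on the domain `Ω`. -/
def IsCompletion {X : Type*} (Ω : Set (X × X)) (KΩ : X → X → ℝ) (K : X → X → ℝ) : Prop :=
  IsKernel K ∧ ∀ x y, (x, y) ∈ Ω → K x y = KΩ x y


/-!
The forward direction is the Schur product theorem: for a kernel `K`, the entrywise product of
`M` with `[K (x i) (x j)]` is positive semidefinite, and the sum of its entries is the pairing in
the criterion.

For the converse, first fix finitely many points. The positive semidefinite matrices, with the
entries outside `Ω` erased, form a convex cone; it is closed because a positive semidefinite matrix
is bounded entrywise by its diagonal, which `Ω` retains. If the erased `KΩ` lay outside this cone,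
Farkas' lemma would give a functional nonnegative on the cone and negative at `KΩ`; its matrix,
symmetrized and restricted to `Ω`, is a positive semidefinite `M` supported on `Ω` that violates
the criterion. So every finite set of points carries a positive semidefinite completion. These
partial completions satisfy `|K x y| ≤ (K x x + K y y) / 2`, hence lie in a fixed product of
compact intervals, and Tychonoff's theorem produces one function completing all of them at once.
-/

open Matrix

instance Matrix.locallyConvexSpace {𝕜 E m n : Type*} [Semiring 𝕜] [PartialOrder 𝕜]
    [AddCommMonoid E] [TopologicalSpace E] [Module 𝕜 E] [LocallyConvexSpace 𝕜 E] :
    LocallyConvexSpace 𝕜 (Matrix m n E) :=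
  inferInstanceAs (LocallyConvexSpace 𝕜 (m → n → E))

theorem IsClosed.image_of_isBounded_inter_preimage {E F : Type*} [PseudoMetricSpace E]
    [ProperSpace E] [MetricSpace F] {D : Set E} (hD : IsClosed D) {P : E → F}
    (hP : Continuous P)
    (hbdd : ∀ s, Bornology.IsBounded s → Bornology.IsBounded (D ∩ P ⁻¹' s)) :
    IsClosed (P '' D) := by
  refine closure_subset_iff_isClosed.1 fun y hy => ?_
  have hcpt : IsCompact (P '' (D ∩ P ⁻¹' Metric.closedBall y 1)) :=
    (Metric.isCompact_of_isClosed_isBounded (hD.inter (Metric.isClosed_closedBall.preimage hP))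
      (hbdd _ Metric.isBounded_closedBall)).image hP
  have hy' : y ∈ closure (P '' (D ∩ P ⁻¹' Metric.closedBall y 1)) := by
    rw [Set.image_inter_preimage, Set.inter_comm]
    refine closure_mono (Set.inter_subset_inter_left _ Metric.ball_subset_closedBall) ?_
    exact Metric.isOpen_ball.inter_closure ⟨Metric.mem_ball_self one_pos, hy⟩
  exact Set.image_mono Set.inter_subset_left (hcpt.isClosed.closure_subset hy')

namespace Matrix

section Pattern

variable {n : Type*}

def maskₗ {R : Type*} [Semiring R] (S : n → n → Prop) [DecidableRel S] :
    Matrix n n R →ₗ[R] Matrix n n R where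
  toFun A := of fun i j => if S i j then A i j else 0
  map_add' A B := by ext i j; by_cases S i j <;> simp [*]
  map_smul' c A := by ext i j; by_cases S i j <;> simp [*]

lemma maskₗ_apply {R : Type*} [Semiring R] (S : n → n → Prop) [DecidableRel S]
    (A : Matrix n n R) (i j : n) : maskₗ S A i j = if S i j then A i j else 0 := rfl

lemma continuous_maskₗ {R : Type*} [Semiring R] [TopologicalSpace R] {S : n → n → Prop}
    [DecidableRel S] : Continuous (maskₗ S : Matrix n n R →ₗ[R] Matrix n n R) :=
  continuous_matrix fun i j => continuous_if_const _ (fun _ => continuous_id.matrix_elem i j)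
    fun _ => continuous_const

variable (n) in
def posSemidefCone : PointedCone ℝ (Matrix n n ℝ) where
  carrier := {A | A.PosSemidef}
  add_mem' := PosSemidef.add
  zero_mem' := PosSemidef.zero
  smul_mem' c _ hA := hA.smul c.2

@[simp]
lemma mem_posSemidefCone {A : Matrix n n ℝ} : A ∈ posSemidefCone n ↔ A.PosSemidef := Iff.rfl

end Pattern

variable {n : Type*} [Fintype n]

lemma dotProduct_mulVec_self_eq_sum (A : Matrix n n ℝ) (v : n → ℝ) :
    v ⬝ᵥ (A *ᵥ v) = ∑ i, ∑ j, v i * v j * A i j := by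
  simp only [dotProduct, mulVec, Finset.mul_sum]
  exact Finset.sum_congr rfl fun i _ => Finset.sum_congr rfl fun j _ => by ring

lemma PosSemidef.abs_apply_le {A : Matrix n n ℝ} (hA : A.PosSemidef) (i j : n) :
    |A i j| ≤ (A i i + A j j) / 2 := by
  classical
  have hform (s : ℝ) : 0 ≤ A i i + s * A j i + s * (A i j + s * A j j) := by
    have := hA.dotProduct_mulVec_nonneg (Pi.single i 1 + Pi.single j s)
    simpa [mulVec_add, dotProduct_add, add_dotProduct, mulVec_single] using this
  have hsymm : A i j = A j i := by simpa using hA.isHermitian.apply j i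
  rw [abs_le]
  constructor <;> nlinarith [hform 1, hform (-1)]

lemma isClosed_setOf_posSemidef : IsClosed {A : Matrix n n ℝ | A.PosSemidef} := by
  simp only [posSemidef_iff_dotProduct_mulVec, Set.ofPred_and, Set.ofPred_forall]
  refine .inter (isClosed_eq continuous_id.matrix_conjTranspose continuous_id)
    (isClosed_iInter fun v => isClosed_le continuous_const ?_)
  exact continuous_const.dotProduct (continuous_id.matrix_mulVec continuous_const)

lemma PosSemidef.sum_mul_nonneg {A B : Matrix n n ℝ} (hA : A.PosSemidef) (hB : B.PosSemidef) :
    0 ≤ ∑ i, ∑ j, A i j * B i j := by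
  simpa [dotProduct, mulVec] using (hA.hadamard hB).dotProduct_mulVec_nonneg 1

lemma apply_eq_sum_mul_apply_single {R : Type*} [CommSemiring R] [DecidableEq n]
    (f : Matrix n n R →ₗ[R] R) (A : Matrix n n R) :
    f A = ∑ i, ∑ j, A i j * f (single i j 1) := by
  conv_lhs => rw [matrix_eq_sum_single A]
  simp only [map_sum]
  refine Finset.sum_congr rfl fun i _ => Finset.sum_congr rfl fun j _ => ?_
  rw [show single i j (A i j) = A i j • single i j 1 by rw [smul_single, smul_eq_mul, mul_one],
    map_smul, smul_eq_mul]

open scoped Matrix.Norms.Elementwise in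
lemma PosSemidef.norm_le_norm_maskₗ {A : Matrix n n ℝ} (hA : A.PosSemidef)
    {S : n → n → Prop} [DecidableRel S] (hS : ∀ i, S i i) : ‖A‖ ≤ ‖maskₗ S A‖ := by
  have hdiag (k : n) : A k k ≤ ‖maskₗ S A‖ := by
    simpa [maskₗ, hS k] using
      (le_abs_self _).trans (norm_entry_le_entrywise_sup_norm (maskₗ S A) (i := k) (j := k))
  refine (norm_le_iff (norm_nonneg _)).2 fun i j => ?_
  rw [Real.norm_eq_abs]
  linarith [hA.abs_apply_le i j, hdiag i, hdiag j]

open scoped Matrix.Norms.Elementwise in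
lemma isClosed_image_maskₗ_setOf_posSemidef {S : n → n → Prop} [DecidableRel S]
    (hS : ∀ i, S i i) : IsClosed (maskₗ S '' {A : Matrix n n ℝ | A.PosSemidef}) := by
  refine isClosed_setOf_posSemidef.image_of_isBounded_inter_preimage continuous_maskₗ
    fun s hs => ?_
  obtain ⟨r, hr⟩ := hs.subset_closedBall 0
  refine (Metric.isBounded_closedBall (x := 0) (r := r)).subset fun A ⟨hA, hAs⟩ => ?_
  simpa using (hA.norm_le_norm_maskₗ hS).trans (by simpa using hr hAs)

def maskedPosSemidefCone (S : n → n → Prop) [DecidableRel S] (hS : ∀ i, S i i) :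
    ProperCone ℝ (Matrix n n ℝ) where
  toSubmodule := (posSemidefCone n).map ((maskₗ S).restrictScalars _)
  isClosed' := isClosed_image_maskₗ_setOf_posSemidef hS

theorem exists_posSemidef_completion_of_sum_mul_nonneg {S : n → n → Prop} [DecidableRel S]
    (hrefl : ∀ i, S i i) (hsymm : ∀ i j, S i j → S j i) {B : Matrix n n ℝ}
    (hB : ∀ i j, S i j → B i j = B j i)
    (h : ∀ M : Matrix n n ℝ, M.PosSemidef → (∀ i j, ¬ S i j → M i j = 0) →
      0 ≤ ∑ i, ∑ j, M i j * B i j) :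
    ∃ A : Matrix n n ℝ, A.PosSemidef ∧ ∀ i j, S i j → A i j = B i j := by
  classical
  by_contra hnot
  have hB_notMem : maskₗ S B ∉ maskedPosSemidefCone S hrefl := by
    rintro ⟨A, hA, hAB⟩
    refine hnot ⟨A, hA, fun i j hij => ?_⟩
    simpa [maskₗ_apply, hij] using congrFun₂ hAB i j
  obtain ⟨f, hf_nonneg, hfB⟩ := ProperCone.hyperplane_separation_point _ hB_notMem
  set Φ : Matrix n n ℝ := of fun i j => f (single i j 1)
  set M : Matrix n n ℝ := maskₗ S ((1 / 2 : ℝ) • (Φ + Φᵀ))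
  have hf (X : Matrix n n ℝ) : f X = ∑ i, ∑ j, X i j * Φ i j :=
    apply_eq_sum_mul_apply_single (f : Matrix n n ℝ →ₗ[ℝ] ℝ) X
  have hfM (Y : Matrix n n ℝ) (hY : ∀ i j, S i j → Y i j = Y j i) :
      f (maskₗ S Y) = ∑ i, ∑ j, M i j * Y i j := by
    have hswap : ∑ i, ∑ j, (if S i j then Y i j * Φ j i else 0) =
        ∑ i, ∑ j, (if S i j then Y i j * Φ i j else 0) := by
      rw [Finset.sum_comm]
      refine Finset.sum_congr rfl fun i _ => Finset.sum_congr rfl fun j _ => ?_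
      by_cases hij : S i j
      · rw [if_pos (hsymm i j hij), if_pos hij, hY i j hij]
      · rw [if_neg (mt (hsymm j i) hij), if_neg hij]
    have hM_apply (i j : n) : M i j * Y i j = (1 / 2) *
        ((if S i j then Y i j * Φ i j else 0) + (if S i j then Y i j * Φ j i else 0)) := by
      by_cases hij : S i j
      · simp [M, maskₗ_apply, hij]; ring
      · simp [M, maskₗ_apply, hij]
    have hmask_apply (i j : n) :
        maskₗ S Y i j * Φ i j = if S i j then Y i j * Φ i j else 0 := by
      by_cases hij : S i j <;> simp [maskₗ_apply, hij]
    rw [hf]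
    simp only [hM_apply, hmask_apply, ← Finset.mul_sum, Finset.sum_add_distrib, hswap]
    ring
  have hM : M.PosSemidef := by
    refine posSemidef_iff_dotProduct_mulVec.2 ⟨?_, fun v => ?_⟩
    · ext i j
      by_cases hij : S i j
      · simp [M, maskₗ_apply, hij, hsymm i j hij, add_comm]
      · simp [M, maskₗ_apply, hij, mt (hsymm j i) hij]
    · have hv : maskₗ S (vecMulVec v v) ∈ maskedPosSemidefCone S hrefl :=
        ⟨_, by simpa using posSemidef_vecMulVec_self_star v, rfl⟩
      have := hf_nonneg _ hv
      rw [hfM _ fun i j _ => by simp [vecMulVec_apply, mul_comm]] at this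
      simpa [dotProduct_mulVec_self_eq_sum, vecMulVec_apply, mul_comm] using this
  have := h M hM fun i j hij => by simp [M, maskₗ_apply, hij]
  rw [← hfM B hB] at this
  linarith

end Matrix

section Completion

variable {X : Type*}

lemma isKernel_iff_posSemidef {K : X → X → ℝ} :
    IsKernel K ↔ ∀ n (x : Fin n → X), (of fun i j => K (x i) (x j)).PosSemidef := by
  simp only [posSemidef_iff_dotProduct_mulVec, star_trivial, dotProduct_mulVec_self_eq_sum,
    of_apply]
  constructor
  · rintro ⟨hsymm, hpos⟩ n x
    exact ⟨IsHermitian.ext fun i j => by simp [hsymm], fun v => hpos n v x⟩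
  · intro h
    exact ⟨fun x y => by simpa using ((h 2 ![x, y]).1.apply 0 1).symm,
      fun n α x => (h n x).2 α⟩

open scoped Classical in
def PaulsenCriterion (Ω : Set (X × X)) (KΩ : X → X → ℝ) : Prop :=
  ∀ (n : ℕ), 1 ≤ n → ∀ (x : Fin n → X) (M : Matrix (Fin n) (Fin n) ℝ),
    M.PosSemidef → (∀ i j, (x i, x j) ∉ Ω → M i j = 0) →
    0 ≤ ∑ i, ∑ j, if (x i, x j) ∈ Ω then M i j * KΩ (x i) (x j) else 0

variable {Ω : Set (X × X)} {KΩ : X → X → ℝ}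

lemma IsCompletion.paulsenCriterion {K : X → X → ℝ} (hK : IsCompletion Ω KΩ K) :
    PaulsenCriterion Ω KΩ := by
  intro n _ x M hM hsupp
  classical
  have hterm (i j : Fin n) : (if (x i, x j) ∈ Ω then M i j * KΩ (x i) (x j) else 0) =
      M i j * K (x i) (x j) := by
    split_ifs with h
    · rw [hK.2 _ _ h]
    · rw [hsupp i j h, zero_mul]
  simp only [hterm]
  exact hM.sum_mul_nonneg (isKernel_iff_posSemidef.1 hK.1 n x)

lemma PaulsenCriterion.sum_mul_nonneg (h : PaulsenCriterion Ω KΩ) {ι : Type*} [Fintype ι]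
    (x : ι → X) {M : Matrix ι ι ℝ} (hM : M.PosSemidef)
    (hsupp : ∀ i j, (x i, x j) ∉ Ω → M i j = 0) :
    0 ≤ ∑ i, ∑ j, M i j * KΩ (x i) (x j) := by
  classical
  rcases isEmpty_or_nonempty ι with hι | hι
  · simp
  let e := (Fintype.equivFin ι).symm
  have hterm (i j : ι) : (if (x i, x j) ∈ Ω then M i j * KΩ (x i) (x j) else 0) =
      M i j * KΩ (x i) (x j) := by
    split_ifs with h
    · rfl
    · rw [hsupp i j h, zero_mul]
  calc 0 ≤ ∑ i, ∑ j, if (x (e i), x (e j)) ∈ Ω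
          then M (e i) (e j) * KΩ (x (e i)) (x (e j)) else 0 :=
        h _ Fintype.card_pos (x ∘ e) (M.submatrix e e) (hM.submatrix e) fun i j =>
          hsupp (e i) (e j)
    _ = ∑ i, ∑ j, M i j * KΩ (x i) (x j) :=
        Fintype.sum_equiv e _ _ fun i => Fintype.sum_equiv e _ _ fun j => hterm (e i) (e j)

lemma PaulsenCriterion.exists_posSemidef (hΩ : IsCompletionDomain Ω)
    (hsymm : ∀ x y, (x, y) ∈ Ω → KΩ x y = KΩ y x) (h : PaulsenCriterion Ω KΩ)
    {ι : Type*} [Fintype ι] (x : ι → X) :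
    ∃ A : Matrix ι ι ℝ, A.PosSemidef ∧
      ∀ i j, (x i, x j) ∈ Ω → A i j = KΩ (x i) (x j) := by
  classical
  exact exists_posSemidef_completion_of_sum_mul_nonneg (S := fun i j => (x i, x j) ∈ Ω)
    (fun i => hΩ.2 _) (fun i j => (hΩ.1 _ _).1) (fun i j => hsymm _ _)
    fun M hM hsupp => h.sum_mul_nonneg x hM hsupp

variable (Ω KΩ) in
/-- The entrywise bound holds for every positive semidefinite completion on `F`
(`PosSemidef.abs_apply_le`); it is there to make these sets compact. -/
def completionsOn (F : Finset X) : Set (X → X → ℝ) :=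
  {K | (∀ x y, |K x y| ≤ (|KΩ x x| + |KΩ y y|) / 2) ∧
    ((of K).submatrix ((↑) : F → X) (↑)).PosSemidef ∧
    ∀ x ∈ F, ∀ y ∈ F, (x, y) ∈ Ω → K x y = KΩ x y}

lemma completionsOn_anti : Antitone (completionsOn Ω KΩ) := by
  intro F F' hFF' K ⟨hbound, hK, hagree⟩
  refine ⟨hbound, ?_, fun x hx y hy => hagree x (hFF' hx) y (hFF' hy)⟩
  exact hK.submatrix fun x : F => (⟨x, hFF' x.2⟩ : F')

lemma isClosed_completionsOn (F : Finset X) : IsClosed (completionsOn Ω KΩ F) := by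
  simp only [completionsOn, Set.ofPred_and, Set.ofPred_forall]
  refine .inter (isClosed_iInter fun x => isClosed_iInter fun y => ?_) (.inter ?_ ?_)
  · exact isClosed_le (continuous_apply_apply x y).abs continuous_const
  · have hcont : Continuous fun K : X → X → ℝ =>
        (of K).submatrix ((↑) : F → X) ((↑) : F → X) :=
      continuous_matrix fun (i j : F) => continuous_apply_apply (i : X) (j : X)
    exact isClosed_setOf_posSemidef.preimage hcont
  · refine isClosed_iInter fun x => isClosed_iInter fun _ => isClosed_iInter fun y =>
      isClosed_iInter fun _ => isClosed_iInter fun _ => ?_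
    exact isClosed_eq (continuous_apply_apply x y) continuous_const

lemma isCompact_completionsOn (F : Finset X) : IsCompact (completionsOn Ω KΩ F) := by
  refine (isCompact_univ_pi fun x => isCompact_univ_pi fun y => isCompact_Icc).of_isClosed_subset
    (isClosed_completionsOn F) fun K hK x _ y _ => abs_le.1 (hK.1 x y)

lemma PaulsenCriterion.completionsOn_nonempty (hΩ : IsCompletionDomain Ω)
    (hsymm : ∀ x y, (x, y) ∈ Ω → KΩ x y = KΩ y x) (h : PaulsenCriterion Ω KΩ)
    (F : Finset X) :
    (completionsOn Ω KΩ F).Nonempty := by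
  classical
  obtain ⟨A, hA, hAK⟩ := h.exists_posSemidef hΩ hsymm ((↑) : F → X)
  refine ⟨fun x y => if h : x ∈ F ∧ y ∈ F then A ⟨x, h.1⟩ ⟨y, h.2⟩ else 0,
    fun x y => ?_, ?_, fun x hx y hy hxy => ?_⟩
  · dsimp only
    split_ifs with hxy
    · have hdiag (z : F) : A z z ≤ |KΩ z z| := (hAK z z (hΩ.2 z)).le.trans (le_abs_self _)
      linarith [hA.abs_apply_le ⟨x, hxy.1⟩ ⟨y, hxy.2⟩, hdiag ⟨x, hxy.1⟩,
        hdiag ⟨y, hxy.2⟩]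
    · simp only [abs_zero]; positivity
  · convert hA
    ext u v
    simp
  · simpa [hx, hy] using hAK ⟨x, hx⟩ ⟨y, hy⟩ hxy

lemma isCompletion_of_forall_mem_completionsOn {K : X → X → ℝ}
    (hK : ∀ F, K ∈ completionsOn Ω KΩ F) : IsCompletion Ω KΩ K := by
  classical
  refine ⟨isKernel_iff_posSemidef.2 fun n x => ?_, fun x y hxy => ?_⟩
  · have hx (i : Fin n) : x i ∈ Finset.univ.image x :=
      Finset.mem_image_of_mem x (Finset.mem_univ i)
    exact (hK (Finset.univ.image x)).2.1.submatrix fun i => ⟨x i, hx i⟩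
  · exact (hK {x, y}).2.2 x (by simp) y (by simp) hxy

theorem PaulsenCriterion.exists_completion (hΩ : IsCompletionDomain Ω)
    (hsymm : ∀ x y, (x, y) ∈ Ω → KΩ x y = KΩ y x) (h : PaulsenCriterion Ω KΩ) :
    ∃ K, IsCompletion Ω KΩ K := by
  obtain ⟨K, hK⟩ := IsCompact.nonempty_iInter_of_directed_nonempty_isCompact_isClosed _
    completionsOn_anti.directed_ge (h.completionsOn_nonempty hΩ hsymm) isCompact_completionsOn
    isClosed_completionsOn
  exact ⟨K, isCompletion_of_forall_mem_completionsOn (Set.mem_iInter.1 hK)⟩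

end Completion

open scoped Classical in
/-- Paulsen's criterion: a symmetric `KΩ` admits a completion iff for every finite tuple of
points and every positive semidefinite matrix supported on `Ω`, the pairing with `KΩ` is
nonnegative. -/
theorem completion_exists_iff_paulsen {X : Type*}
    (Ω : Set (X × X)) (hΩ : IsCompletionDomain Ω) (KΩ : X → X → ℝ)
    (hsymm : ∀ x y, (x, y) ∈ Ω → KΩ x y = KΩ y x) :
    (∃ K : X → X → ℝ, IsCompletion Ω KΩ K) ↔
      ∀ (n : ℕ), 1 ≤ n → ∀ (x : Fin n → X) (M : Matrix (Fin n) (Fin n) ℝ),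
        M.PosSemidef → (∀ i j, (x i, x j) ∉ Ω → M i j = 0) →
        0 ≤ ∑ i, ∑ j, if (x i, x j) ∈ Ω then M i j * KΩ (x i) (x j) else 0 :=
  ⟨fun ⟨_, hK⟩ => hK.paulsenCriterion, PaulsenCriterion.exists_completion hΩ hsymm⟩
end

section
/- Let X = X₁ ∪ X₂ and Ω = (X₁ × X₁) ∪ (X₂ × X₂), let K_Ω be a partially reproducing kernel on Ω, and let (H₁, k₁) and (H₂, k₂) be realizations of K_{X₁} = K_Ω|_{X₁ × X₁} and K_{X₂} = K_Ω|_{X₂ × X₂} respectively. Then: (i) for every completion K of K_Ω there exists a unique continuous linear operator Φ : H₁ → H₂ with ‖Φ‖ ≤ 1 such that K(x,y) = ⟪Φ(k₁ x), k₂ y⟫ for all x ∈ X₁ and y ∈ X₂, and this Φ satisfies Φ(k₁ x) = k₂ x for all x ∈ X₁ ∩ X₂; (ii) conversely, for every continuous linear operator Φ : H₁ → H₂ with ‖Φ‖ ≤ 1 satisfying Φ(k₁ x) = k₂ x for all x ∈ X₁ ∩ X₂, the function K : X × X → ℝ defined by K(x,y) = K_Ω(x,y) for (x,y) ∈ Ω,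 K(x,y) = ⟪Φ(k₁ x), k₂ y⟫ for x ∈ X₁ ∖ X₂ and y ∈ X₂ ∖ X₁, and K(x,y) = ⟪Φ(k₁ y), k₂ x⟫ for x ∈ X₂ ∖ X₁ and y ∈ X₁ ∖ X₂, is a completion of K_Ω. -/
open scoped RealInnerProductSpace

/-- `KΩ` is a partially reproducing kernel on `Ω ⊆ X × X`: every restriction to a square
`A × A ⊆ Ω` is a reproducing kernel on `A`. -/
def IsPartialKernel {X : Type*} (Ω : Set (X × X)) (KΩ : X → X → ℝ) : Prop :=
  ∀ A : Set X, A ×ˢ A ⊆ Ω → IsKernel (fun a b : A => KΩ a b)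

/-!
Realize the completion `K` by a feature map `φ : X → W` into a Hilbert space (its RKHS). The
families `k₁` and `φ ∘ (↑)` on `X₁` have the same Gram matrix, so `k₁ u ↦ φ u` extends to an
isometry `V₁ : H₁ → W`; likewise `V₂ : H₂ → W`, and `Φ = V₂† V₁` is the required contraction. It
is unique because the `kᵢ` span dense subspaces. Conversely, splitting a finite family into its
points in `X₁` and in `X₁ᶜ ⊆ X₂` writes the quadratic form of `K` as
`‖ξ‖² + 2 ⟪Φ ξ, η⟫ + ‖η‖²`, which is nonnegative because `‖Φ‖ ≤ 1`.
-/

universe u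

open scoped InnerProduct

section IsometricExtension

variable {ι H G : Type*} [NormedAddCommGroup H] [InnerProductSpace ℝ H]
  [NormedAddCommGroup G] [InnerProductSpace ℝ G]

theorem norm_linearCombination_eq_of_inner_eq {k : ι → H} {ψ : ι → G}
    (h : ∀ i j, ⟪ψ i, ψ j⟫ = ⟪k i, k j⟫) (c : ι →₀ ℝ) :
    ‖Finsupp.linearCombination ℝ ψ c‖ = ‖Finsupp.linearCombination ℝ k c‖ := by
  rw [← sq_eq_sq₀ (norm_nonneg _) (norm_nonneg _), ← real_inner_self_eq_norm_sq,
    ← real_inner_self_eq_norm_sq]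
  simp only [Finsupp.linearCombination_apply, Finsupp.sum_inner, Finsupp.inner_sum,
    real_inner_smul_left, real_inner_smul_right, h]

theorem exists_opNorm_le_one_apply_eq_of_inner_eq [CompleteSpace G] {k : ι → H}
    (hk : Dense (Submodule.span ℝ (Set.range k) : Set H)) {ψ : ι → G}
    (h : ∀ i j, ⟪ψ i, ψ j⟫ = ⟪k i, k j⟫) :
    ∃ V : H →L[ℝ] G, ‖V‖ ≤ 1 ∧ ∀ i, V (k i) = ψ i := by
  have hdense : DenseRange (Finsupp.linearCombination ℝ k) := by
    rwa [DenseRange, ← LinearMap.coe_range, Finsupp.range_linearCombination]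
  have hbound (c : ι →₀ ℝ) :
      ‖Finsupp.linearCombination ℝ ψ c‖ ≤ 1 * ‖Finsupp.linearCombination ℝ k c‖ := by
    rw [one_mul, norm_linearCombination_eq_of_inner_eq h]
  refine ⟨_, LinearMap.opNorm_extendOfNorm_le hdense zero_le_one hbound, fun i => ?_⟩
  simpa using LinearMap.extendOfNorm_eq hdense ⟨1, hbound⟩ (Finsupp.single i 1)

end IsometricExtension

theorem eq_of_forall_inner_eq_of_dense_span {ι E : Type*} [NormedAddCommGroup E]
    [InnerProductSpace ℝ E] {k : ι → E} (hk : Dense (Submodule.span ℝ (Set.range k) : Set E))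
    {x y : E} (h : ∀ i, ⟪x, k i⟫ = ⟪y, k i⟫) : x = y :=
  innerSL_inj.mp <| ContinuousLinearMap.ext_on hk <| by rintro _ ⟨i, rfl⟩; exact h i

namespace IsKernel

variable {X : Type u} {K : X → X → ℝ}

theorem finsupp_sum_nonneg (hK : IsKernel K) (c : X →₀ ℝ) :
    0 ≤ c.sum fun x a => c.sum fun y b => a * K x y * b := by
  let e := c.support.equivFin
  have h := hK.2 _ (fun i => c (e.symm i)) (fun i => e.symm i)
  simp only [Finsupp.sum, ← Finset.sum_coe_sort c.support]
  convert h using 1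
  exact Fintype.sum_equiv e _ _ fun i => Fintype.sum_equiv e _ _ fun j => by
    simp only [Equiv.symm_apply_apply]; ring

theorem posSemidef (hK : IsKernel K) : (Matrix.of K).PosSemidef :=
  ⟨Matrix.IsHermitian.ext fun x y => by simp [hK.1 y x], by simpa using hK.finsupp_sum_nonneg⟩

/-- Mathlib's RKHS construction takes operator-valued kernels; a scalar kernel is viewed as one
with values `K x y • 1 : ℝ →L[ℝ] ℝ`. -/
theorem posSemidef_map_algebraMap (hK : IsKernel K) :
    ((Matrix.of K).map (algebraMap ℝ (ℝ →L[ℝ] ℝ))).PosSemidef := by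
  refine ((RKHS.posSemidef_tfae
    (K := (Matrix.of K).map (algebraMap ℝ (ℝ →L[ℝ] ℝ)))).out 0 2).mpr ?_
  refine ⟨?_, fun c => ?_⟩
  · exact hK.posSemidef.1.map _ fun r => algebraMap_star_comm r
  · simpa [Algebra.algebraMap_eq_smul_one, hK.1 _ _, mul_comm, mul_left_comm] using
      hK.finsupp_sum_nonneg c

theorem exists_feature_map (hK : IsKernel K) :
    ∃ (H : Type u) (_ : NormedAddCommGroup H) (_ : InnerProductSpace ℝ H) (_ : CompleteSpace H)
      (φ : X → H), ∀ x y, ⟪φ x, φ y⟫ = K x y := by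
  have := Fact.mk hK.posSemidef_map_algebraMap
  refine ⟨RKHS.OfKernel ((Matrix.of K).map (algebraMap ℝ (ℝ →L[ℝ] ℝ))), inferInstance,
    inferInstance, inferInstance, fun x => RKHS.kerFun _ x 1, fun x y => ?_⟩
  rw [← RKHS.kernel_inner, RKHS.OfKernel.kernel_ofKernel]
  simp [Algebra.algebraMap_eq_smul_one, hK.1 x y]

theorem exists_contraction {ι κ H₁ H₂ : Type*}
    [NormedAddCommGroup H₁] [InnerProductSpace ℝ H₁]
    [NormedAddCommGroup H₂] [InnerProductSpace ℝ H₂] [CompleteSpace H₂]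
    (hK : IsKernel K) {x : ι → X} {y : κ → X} {k₁ : ι → H₁} {k₂ : κ → H₂}
    (hk₁ : ∀ i i', ⟪k₁ i, k₁ i'⟫ = K (x i) (x i'))
    (hd₁ : Dense (Submodule.span ℝ (Set.range k₁) : Set H₁))
    (hk₂ : ∀ j j', ⟪k₂ j, k₂ j'⟫ = K (y j) (y j'))
    (hd₂ : Dense (Submodule.span ℝ (Set.range k₂) : Set H₂)) :
    ∃ Φ : H₁ →L[ℝ] H₂, ‖Φ‖ ≤ 1 ∧ ∀ i j, ⟪Φ (k₁ i), k₂ j⟫ = K (x i) (y j) := by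
  obtain ⟨W, _, _, _, φ, hφ⟩ := hK.exists_feature_map
  obtain ⟨V₁, hV₁, hV₁k⟩ :=
    exists_opNorm_le_one_apply_eq_of_inner_eq hd₁ (ψ := φ ∘ x) fun i i' => by simp [hφ, hk₁]
  obtain ⟨V₂, hV₂, hV₂k⟩ :=
    exists_opNorm_le_one_apply_eq_of_inner_eq hd₂ (ψ := φ ∘ y) fun j j' => by simp [hφ, hk₂]
  refine ⟨V₂† ∘L V₁, ?_, fun i j => ?_⟩
  · calc ‖V₂† ∘L V₁‖ ≤ ‖V₂†‖ * ‖V₁‖ := V₂†.opNorm_comp_le V₁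
      _ ≤ 1 := by
        rw [LinearIsometryEquiv.norm_map]
        exact mul_le_one₀ hV₂ (norm_nonneg _) hV₁
  · rw [ContinuousLinearMap.comp_apply, ContinuousLinearMap.adjoint_inner_left, hV₁k, hV₂k]
    exact hφ _ _

end IsKernel

theorem isKernel_of_contraction {X H₁ H₂ : Type*}
    [NormedAddCommGroup H₁] [InnerProductSpace ℝ H₁]
    [NormedAddCommGroup H₂] [InnerProductSpace ℝ H₂]
    (S : Set X) {f : X → H₁} {g : X → H₂} {Φ : H₁ →L[ℝ] H₂} (hΦ : ‖Φ‖ ≤ 1) {K : X → X → ℝ}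
    (h₁₁ : ∀ u ∈ S, ∀ v ∈ S, K u v = ⟪f u, f v⟫)
    (h₁₂ : ∀ u ∈ S, ∀ v ∉ S, K u v = ⟪Φ (f u), g v⟫)
    (h₂₁ : ∀ u ∉ S, ∀ v ∈ S, K u v = ⟪Φ (f v), g u⟫)
    (h₂₂ : ∀ u ∉ S, ∀ v ∉ S, K u v = ⟪g u, g v⟫) :
    IsKernel K := by
  classical
  refine ⟨fun u v => ?_, fun n α x => ?_⟩
  · by_cases hu : u ∈ S <;> by_cases hv : v ∈ S <;>
      simp [h₁₁, h₁₂, h₂₁, h₂₂, hu, hv, real_inner_comm]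
  let a i := if x i ∈ S then α i • f (x i) else 0
  let b i := if x i ∈ S then 0 else α i • g (x i)
  have hterm (i j : Fin n) : α i * α j * K (x i) (x j) =
      ⟪a i, a j⟫ + ⟪Φ (a i), b j⟫ + ⟪Φ (a j), b i⟫ + ⟪b i, b j⟫ := by
    by_cases hi : x i ∈ S <;> by_cases hj : x j ∈ S <;>
      simp [a, b, hi, hj, h₁₁, h₁₂, h₂₁, h₂₂, real_inner_smul_left, real_inner_smul_right] <;>
      ring
  set ξ := ∑ i, a i
  set η := ∑ i, b i
  have hsum : ∑ i, ∑ j, α i * α j * K (x i) (x j) = ‖ξ‖ ^ 2 + 2 * ⟪Φ ξ, η⟫ + ‖η‖ ^ 2 := by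
    simp only [hterm, Finset.sum_add_distrib, ← inner_sum, ← sum_inner, ← map_sum,
      real_inner_self_eq_norm_sq]
    ring
  have hcross : |⟪Φ ξ, η⟫| ≤ ‖ξ‖ * ‖η‖ :=
    (abs_real_inner_le_norm _ _).trans <| mul_le_mul_of_nonneg_right
      ((Φ.le_of_opNorm_le hΦ ξ).trans_eq (one_mul _)) (norm_nonneg _)
  rw [hsum]
  nlinarith [neg_abs_le ⟪Φ ξ, η⟫, sq_nonneg (‖ξ‖ - ‖η‖)]

section SerratedDomain

variable {X : Type u} {H₁ H₂ : Type*} [NormedAddCommGroup H₁] [InnerProductSpace ℝ H₁]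
  [NormedAddCommGroup H₂] [InnerProductSpace ℝ H₂]
  {X₁ X₂ : Set X} {KΩ K : X → X → ℝ} {k₁ : X₁ → H₁} {k₂ : X₂ → H₂}

theorem IsCompletion.existsUnique_contraction [CompleteSpace H₂]
    (hK : IsCompletion (X₁ ×ˢ X₁ ∪ X₂ ×ˢ X₂) KΩ K)
    (hk₁ : ∀ u v : X₁, ⟪k₁ u, k₁ v⟫ = KΩ u v)
    (hd₁ : Dense (Submodule.span ℝ (Set.range k₁) : Set H₁))
    (hk₂ : ∀ u v : X₂, ⟪k₂ u, k₂ v⟫ = KΩ u v)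
    (hd₂ : Dense (Submodule.span ℝ (Set.range k₂) : Set H₂)) :
    ∃! Φ : H₁ →L[ℝ] H₂, ‖Φ‖ ≤ 1 ∧ ∀ (u : X₁) (v : X₂), K u v = ⟪Φ (k₁ u), k₂ v⟫ := by
  obtain ⟨Φ, hΦ, hΦK⟩ := hK.1.exists_contraction (x := Subtype.val) (y := Subtype.val)
    (fun u v => (hk₁ u v).trans (hK.2 _ _ (.inl ⟨u.2, v.2⟩)).symm) hd₁
    (fun u v => (hk₂ u v).trans (hK.2 _ _ (.inr ⟨u.2, v.2⟩)).symm) hd₂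
  refine ⟨Φ, ⟨hΦ, fun u v => (hΦK u v).symm⟩, fun Ψ ⟨_, hΨ⟩ => ?_⟩
  refine ContinuousLinearMap.ext_on hd₁ ?_
  rintro _ ⟨u, rfl⟩
  exact eq_of_forall_inner_eq_of_dense_span hd₂ fun v => by rw [← hΨ, hΦK]

theorem IsCompletion.contraction_apply_eq (hK : IsCompletion (X₁ ×ˢ X₁ ∪ X₂ ×ˢ X₂) KΩ K)
    (hk₂ : ∀ u v : X₂, ⟪k₂ u, k₂ v⟫ = KΩ u v)
    (hd₂ : Dense (Submodule.span ℝ (Set.range k₂) : Set H₂)) {Φ : H₁ →L[ℝ] H₂}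
    (hΦ : ∀ (u : X₁) (v : X₂), K u v = ⟪Φ (k₁ u), k₂ v⟫) (u : X) (h1 : u ∈ X₁) (h2 : u ∈ X₂) :
    Φ (k₁ ⟨u, h1⟩) = k₂ ⟨u, h2⟩ :=
  eq_of_forall_inner_eq_of_dense_span hd₂ fun v => by
    rw [← hΦ, hK.2 _ _ (.inr ⟨h2, v.2⟩), ← hk₂ ⟨u, h2⟩ v]

theorem isCompletion_of_contraction (hcover : X₁ ∪ X₂ = Set.univ)
    (hk₁ : ∀ u v : X₁, ⟪k₁ u, k₁ v⟫ = KΩ u v) (hk₂ : ∀ u v : X₂, ⟪k₂ u, k₂ v⟫ = KΩ u v)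
    {Φ : H₁ →L[ℝ] H₂} (hΦ : ‖Φ‖ ≤ 1)
    (hΦk : ∀ (u : X) (h1 : u ∈ X₁) (h2 : u ∈ X₂), Φ (k₁ ⟨u, h1⟩) = k₂ ⟨u, h2⟩)
    (hKΩ : ∀ u v : X, (u, v) ∈ X₁ ×ˢ X₁ ∪ X₂ ×ˢ X₂ → K u v = KΩ u v)
    (h₁₂ : ∀ (u v : X) (h1 : u ∈ X₁) (h2 : v ∈ X₂), u ∉ X₂ → v ∉ X₁ →
      K u v = ⟪Φ (k₁ ⟨u, h1⟩), k₂ ⟨v, h2⟩⟫)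
    (h₂₁ : ∀ (u v : X) (h2 : u ∈ X₂) (h1 : v ∈ X₁), u ∉ X₁ → v ∉ X₂ →
      K u v = ⟪Φ (k₁ ⟨v, h1⟩), k₂ ⟨u, h2⟩⟫) :
    IsCompletion (X₁ ×ˢ X₁ ∪ X₂ ×ˢ X₂) KΩ K := by
  classical
  have mem₂ {u : X} (hu : u ∉ X₁) : u ∈ X₂ := (hcover.ge (Set.mem_univ u)).resolve_left hu
  refine ⟨isKernel_of_contraction X₁ (f := fun u => if h : u ∈ X₁ then k₁ ⟨u, h⟩ else 0)
    (g := fun u => if h : u ∈ X₂ then k₂ ⟨u, h⟩ else 0) hΦ ?_ ?_ ?_ ?_, hKΩ⟩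
  · intro u hu v hv
    simp [hu, hv, hk₁, hKΩ u v (.inl ⟨hu, hv⟩)]
  · intro u hu v hv
    by_cases hu₂ : u ∈ X₂
    · simp [hu, mem₂ hv, hΦk u hu hu₂, hk₂, hKΩ u v (.inr ⟨hu₂, mem₂ hv⟩)]
    · simpa [hu, mem₂ hv] using h₁₂ u v hu (mem₂ hv) hu₂ hv
  · intro u hu v hv
    by_cases hv₂ : v ∈ X₂
    · rw [hKΩ u v (.inr ⟨mem₂ hu, hv₂⟩), ← hk₂ ⟨u, mem₂ hu⟩ ⟨v, hv₂⟩, real_inner_comm]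
      simp [hv, mem₂ hu, hΦk v hv hv₂]
    · simpa [hv, mem₂ hu] using h₂₁ u v (mem₂ hu) hv hu hv₂
  · intro u hu v hv
    simp [mem₂ hu, mem₂ hv, hk₂, hKΩ u v (.inr ⟨mem₂ hu, mem₂ hv⟩)]

end SerratedDomain

theorem completion_contraction_correspondence_general {X H₁ H₂ : Type*}
    [NormedAddCommGroup H₁] [InnerProductSpace ℝ H₁]
    [NormedAddCommGroup H₂] [InnerProductSpace ℝ H₂] [CompleteSpace H₂]
    (X₁ X₂ : Set X) (hcover : X₁ ∪ X₂ = Set.univ)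
    (KΩ : X → X → ℝ)
    (k₁ : X₁ → H₁) (hk₁ : ∀ u v : X₁, ⟪k₁ u, k₁ v⟫ = KΩ u v)
    (hd₁ : Dense (Submodule.span ℝ (Set.range k₁) : Set H₁))
    (k₂ : X₂ → H₂) (hk₂ : ∀ u v : X₂, ⟪k₂ u, k₂ v⟫ = KΩ u v)
    (hd₂ : Dense (Submodule.span ℝ (Set.range k₂) : Set H₂)) :
    -- (i) every completion is represented by a unique contraction, which agrees with the
    -- canonical identification on `X₁ ∩ X₂`
    (∀ K : X → X → ℝ, IsCompletion (X₁ ×ˢ X₁ ∪ X₂ ×ˢ X₂) KΩ K →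
      (∃! Φ : H₁ →L[ℝ] H₂, ‖Φ‖ ≤ 1 ∧
        ∀ (u : X₁) (v : X₂), K u v = ⟪Φ (k₁ u), k₂ v⟫) ∧
      (∀ Φ : H₁ →L[ℝ] H₂, ‖Φ‖ ≤ 1 →
        (∀ (u : X₁) (v : X₂), K u v = ⟪Φ (k₁ u), k₂ v⟫) →
        ∀ (u : X) (h1 : u ∈ X₁) (h2 : u ∈ X₂), Φ (k₁ ⟨u, h1⟩) = k₂ ⟨u, h2⟩)) ∧
    -- (ii) conversely, every such contraction gives rise to a completion
    (∀ Φ : H₁ →L[ℝ] H₂, ‖Φ‖ ≤ 1 →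
      (∀ (u : X) (h1 : u ∈ X₁) (h2 : u ∈ X₂), Φ (k₁ ⟨u, h1⟩) = k₂ ⟨u, h2⟩) →
      ∀ K : X → X → ℝ,
        (∀ u v : X, (u, v) ∈ X₁ ×ˢ X₁ ∪ X₂ ×ˢ X₂ → K u v = KΩ u v) →
        (∀ (u v : X) (h1 : u ∈ X₁) (h2 : v ∈ X₂), u ∉ X₂ → v ∉ X₁ →
          K u v = ⟪Φ (k₁ ⟨u, h1⟩), k₂ ⟨v, h2⟩⟫) →
        (∀ (u v : X) (h2 : u ∈ X₂) (h1 : v ∈ X₁), u ∉ X₁ → v ∉ X₂ →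
          K u v = ⟪Φ (k₁ ⟨v, h1⟩), k₂ ⟨u, h2⟩⟫) →
        IsCompletion (X₁ ×ˢ X₁ ∪ X₂ ×ˢ X₂) KΩ K) :=
  ⟨fun _ hK => ⟨hK.existsUnique_contraction hk₁ hd₁ hk₂ hd₂,
      fun _ _ hΦ => hK.contraction_apply_eq hk₂ hd₂ hΦ⟩,
    fun _ hΦ hΦk _ hKΩ h₁₂ h₂₁ =>
      isCompletion_of_contraction hcover hk₁ hk₂ hΦ hΦk hKΩ h₁₂ h₂₁⟩

/-- Contraction characterization of completions on the 2-serrated domain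
`(X₁ × X₁) ∪ (X₂ × X₂)`: completions correspond bijectively to contractions
`Φ : H₁ → H₂` with `Φ (k₁ x) = k₂ x` on `X₁ ∩ X₂`. -/
theorem completion_contraction_correspondence {X H₁ H₂ : Type*}
    [NormedAddCommGroup H₁] [InnerProductSpace ℝ H₁] [CompleteSpace H₁]
    [NormedAddCommGroup H₂] [InnerProductSpace ℝ H₂] [CompleteSpace H₂]
    (X₁ X₂ : Set X) (hcover : X₁ ∪ X₂ = Set.univ)
    (KΩ : X → X → ℝ)
    (hpart : IsPartialKernel (X₁ ×ˢ X₁ ∪ X₂ ×ˢ X₂) KΩ)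
    (k₁ : X₁ → H₁) (hk₁ : ∀ u v : X₁, ⟪k₁ u, k₁ v⟫ = KΩ u v)
    (hd₁ : Dense (Submodule.span ℝ (Set.range k₁) : Set H₁))
    (k₂ : X₂ → H₂) (hk₂ : ∀ u v : X₂, ⟪k₂ u, k₂ v⟫ = KΩ u v)
    (hd₂ : Dense (Submodule.span ℝ (Set.range k₂) : Set H₂)) :
    -- (i) every completion is represented by a unique contraction, which agrees with the
    -- canonical identification on `X₁ ∩ X₂`
    (∀ K : X → X → ℝ, IsCompletion (X₁ ×ˢ X₁ ∪ X₂ ×ˢ X₂) KΩ K →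
      (∃! Φ : H₁ →L[ℝ] H₂, ‖Φ‖ ≤ 1 ∧
        ∀ (u : X₁) (v : X₂), K u v = ⟪Φ (k₁ u), k₂ v⟫) ∧
      (∀ Φ : H₁ →L[ℝ] H₂, ‖Φ‖ ≤ 1 →
        (∀ (u : X₁) (v : X₂), K u v = ⟪Φ (k₁ u), k₂ v⟫) →
        ∀ (u : X) (h1 : u ∈ X₁) (h2 : u ∈ X₂), Φ (k₁ ⟨u, h1⟩) = k₂ ⟨u, h2⟩)) ∧
    -- (ii) conversely, every such contraction gives rise to a completion
    (∀ Φ : H₁ →L[ℝ] H₂, ‖Φ‖ ≤ 1 →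
      (∀ (u : X) (h1 : u ∈ X₁) (h2 : u ∈ X₂), Φ (k₁ ⟨u, h1⟩) = k₂ ⟨u, h2⟩) →
      ∀ K : X → X → ℝ,
        (∀ u v : X, (u, v) ∈ X₁ ×ˢ X₁ ∪ X₂ ×ˢ X₂ → K u v = KΩ u v) →
        (∀ (u v : X) (h1 : u ∈ X₁) (h2 : v ∈ X₂), u ∉ X₂ → v ∉ X₁ →
          K u v = ⟪Φ (k₁ ⟨u, h1⟩), k₂ ⟨v, h2⟩⟫) →
        (∀ (u v : X) (h2 : u ∈ X₂) (h1 : v ∈ X₁), u ∉ X₁ → v ∉ X₂ →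
          K u v = ⟪Φ (k₁ ⟨v, h1⟩), k₂ ⟨u, h2⟩⟫) →
        IsCompletion (X₁ ×ˢ X₁ ∪ X₂ ×ˢ X₂) KΩ K) :=
  completion_contraction_correspondence_general X₁ X₂ hcover KΩ k₁ hk₁ hd₁ k₂ hk₂ hd₂
end

section
/- Let X be a set with a partition X = X₁ ⊔ X₂, let Ω be a domain on X with X₁ × X₁ ⊆ Ω and X₂ × X₂ ⊆ Ω, let Δ = Ω ∩ (X₁ × X₂), and let K_Ω : Ω → ℝ be symmetric with K_{X₁} = K_Ω|_{X₁ × X₁} and K_{X₂} = K_Ω|_{X₂ × X₂} reproducing kernels. Let (H₁, k₁) and (H₂, k₂) be realizations of K_{X₁} and K_{X₂}. Then K_Ω admits a completion if and only if for every n ≥ 1, all (x₁,y₁),…,(x_n,y_n) ∈ Δ and all α₁,…,α_n ∈ ℝ, |∑_{j=1}^n α_j K_Ω(x_j, y_j)| ≤ sup{ |∑_{j=1}^n α_j ⟪Φ(k₁ x_j), k₂ y_j⟫| : Φ : H₁ → H₂ continuous linear, ‖Φ‖ ≤ 1 }. -/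
/-!
Both conditions say that some contraction `Φ : H₁ → H₂` satisfies `⟪Φ (k₁ x), k₂ y⟫ = K_Ω(x, y)`
on `Δ`.

Given such `Φ`, extend `k₁, k₂` by zero to `f, g` on `X`; the block kernel
`⟪f x, f y⟫ + ⟪g x, g y⟫ + ⟪Φ (f x), g y⟫ + ⟪Φ (f y), g x⟫` completes `K_Ω` and is positive because
`‖U‖² + ‖V‖² + 2 ⟪Φ U, V⟫ ≥ (‖U‖ - ‖V‖)²`. Conversely, positivity of a completion on finitely many
points of `X₁ ⊔ X₂` gives, by the discriminant, `|∑ aᵢ bⱼ K(xᵢ, yⱼ)| ≤ ‖∑ aᵢ k₁ xᵢ‖ ‖∑ bⱼ k₂ yⱼ‖`,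
hence a contraction between the finite-dimensional spans, extended to `H₁` by orthogonal
projection; this gives the tensor bound.

The tensor bound says that `∑ αⱼ k₁ xⱼ ⊗ k₂ yⱼ ↦ ∑ αⱼ K_Ω(xⱼ, yⱼ)` is well defined and dominated by
the projective norm on `H₁ ⊗ H₂`. Hahn–Banach extends it to all of `H₁ ⊗ H₂`; the resulting
bilinear form of norm at most one is `(x, y) ↦ ⟪Φ x, y⟫` by the Riesz representation theorem.
-/

open scoped RealInnerProductSpace

open scoped TensorProduct

theorem Seminorm.exists_comp_eq_of_abs_le {E M : Type*} [AddCommGroup E] [Module ℝ E]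
    [AddCommGroup M] [Module ℝ M] (p : Seminorm ℝ E) (L : M →ₗ[ℝ] E) (c : M →ₗ[ℝ] ℝ)
    (h : ∀ m, |c m| ≤ p (L m)) : ∃ G : E →ₗ[ℝ] ℝ, G ∘ₗ L = c ∧ ∀ x, |G x| ≤ p x := by
  obtain ⟨σ, hσ⟩ := L.rangeRestrict.exists_rightInverse_of_surjective L.range_rangeRestrict
  have hcσ : ∀ m, c (σ ⟨L m, LinearMap.mem_range_self L m⟩) = c m := by
    intro m
    have hL : L (σ ⟨L m, LinearMap.mem_range_self L m⟩ - m) = 0 := by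
      simpa [sub_eq_zero] using
        congrArg Subtype.val (LinearMap.congr_fun hσ ⟨L m, LinearMap.mem_range_self L m⟩)
    simpa [hL, sub_eq_zero] using h (σ ⟨L m, LinearMap.mem_range_self L m⟩ - m)
  obtain ⟨G, hGc, hGp⟩ := exists_extension_of_le_sublinear ⟨LinearMap.range L, c ∘ₗ σ⟩ p
    (fun r hr x => by rw [map_smul_eq_mul, Real.norm_of_nonneg hr.le]) (map_add_le_add p)
    (by rintro ⟨_, m, rfl⟩; exact (le_abs_self _).trans (by simpa [hcσ] using h m))
  refine ⟨G, LinearMap.ext fun m => ?_, fun x => abs_le.2 ⟨?_, hGp x⟩⟩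
  · simpa [hcσ] using hGc ⟨L m, m, rfl⟩
  · exact neg_le.1 (by simpa using hGp (-x))

section Contractions

variable {H₁ H₂ : Type*} [NormedAddCommGroup H₁] [InnerProductSpace ℝ H₁]
  [NormedAddCommGroup H₂] [InnerProductSpace ℝ H₂]

theorem sum_sum_mul_inner_eq_inner_sum {ι κ : Type*} [Fintype ι] [Fintype κ]
    (a : ι → ℝ) (b : κ → ℝ) (u : ι → H₁) (w : κ → H₁) :
    ∑ i, ∑ j, a i * b j * ⟪u i, w j⟫ = ⟪∑ i, a i • u i, ∑ j, b j • w j⟫ := by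
  rw [sum_inner]
  simp only [inner_sum, real_inner_smul_left, real_inner_smul_right]
  exact Finset.sum_congr rfl fun i _ => Finset.sum_congr rfl fun j _ => by ring

theorem ContinuousLinearMap.abs_inner_le_of_norm_le_one {Φ : H₁ →L[ℝ] H₂} (hΦ : ‖Φ‖ ≤ 1)
    (x : H₁) (y : H₂) : |⟪Φ x, y⟫| ≤ ‖x‖ * ‖y‖ :=
  (abs_real_inner_le_norm _ _).trans <| mul_le_mul_of_nonneg_right
    ((Φ.le_of_opNorm_le hΦ x).trans_eq (one_mul _)) (norm_nonneg y)

theorem exists_contraction_inner_eq_of_abs_le [CompleteSpace H₂] (β : H₁ →ₗ[ℝ] H₂ →ₗ[ℝ] ℝ)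
    (hβ : ∀ x y, |β x y| ≤ ‖x‖ * ‖y‖) :
    ∃ Φ : H₁ →L[ℝ] H₂, ‖Φ‖ ≤ 1 ∧ ∀ x y, ⟪Φ x, y⟫ = β x y := by
  let B : H₁ →L[ℝ] H₂ →L[ℝ] ℝ := β.mkContinuous₂ 1 fun x y => by simpa using hβ x y
  refine ⟨(InnerProductSpace.toDual ℝ H₂).symm.toContinuousLinearEquiv.toContinuousLinearMap.comp B,
    ContinuousLinearMap.opNorm_le_bound _ zero_le_one fun x => ?_, fun x y => ?_⟩
  · simpa using B.le_of_opNorm_le (LinearMap.mkContinuous₂_norm_le _ zero_le_one _) x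
  · simp [B, InnerProductSpace.toDual_symm_apply]

noncomputable def contractionPairing (Φ : H₁ →L[ℝ] H₂) : H₁ ⊗[ℝ] H₂ →ₗ[ℝ] ℝ :=
  TensorProduct.lift ((innerₗ H₂).comp (Φ : H₁ →ₗ[ℝ] H₂))

@[simp]
theorem contractionPairing_tmul (Φ : H₁ →L[ℝ] H₂) (x : H₁) (y : H₂) :
    contractionPairing Φ (x ⊗ₜ y) = ⟪Φ x, y⟫ :=
  TensorProduct.lift.tmul x y

theorem bddAbove_range_abs_contractionPairing (t : H₁ ⊗[ℝ] H₂) :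
    BddAbove (Set.range fun Φ : Metric.closedBall (0 : H₁ →L[ℝ] H₂) 1 =>
      |contractionPairing Φ t|) := by
  induction t using TensorProduct.induction_on with
  | zero => exact ⟨0, Set.forall_mem_range.2 fun Φ => by simp⟩
  | tmul x y =>
    exact ⟨‖x‖ * ‖y‖, Set.forall_mem_range.2 fun Φ => by
      simpa using (Φ : H₁ →L[ℝ] H₂).abs_inner_le_of_norm_le_one
        (mem_closedBall_zero_iff.1 Φ.2) x y⟩
  | add s t hs ht =>
    obtain ⟨a, ha⟩ := hs
    obtain ⟨b, hb⟩ := ht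
    exact ⟨a + b, Set.forall_mem_range.2 fun Φ => by
      rw [map_add]
      exact (abs_add_le _ _).trans (add_le_add (ha ⟨Φ, rfl⟩) (hb ⟨Φ, rfl⟩))⟩

variable (H₁ H₂) in
/-- The projective tensor norm, through the duality `(H₁ ⊗̂_π H₂)* = (H₁ →L[ℝ] H₂)`. -/
noncomputable def contractionSeminorm : Seminorm ℝ (H₁ ⊗[ℝ] H₂) :=
  ⨆ Φ : Metric.closedBall (0 : H₁ →L[ℝ] H₂) 1, (normSeminorm ℝ ℝ).comp (contractionPairing Φ)

theorem contractionSeminorm_apply (t : H₁ ⊗[ℝ] H₂) :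
    contractionSeminorm H₁ H₂ t =
      ⨆ Φ : Metric.closedBall (0 : H₁ →L[ℝ] H₂) 1, |contractionPairing Φ t| :=
  Seminorm.iSup_apply (Seminorm.bddAbove_range_iff.2 bddAbove_range_abs_contractionPairing)

theorem abs_contractionPairing_le {Φ : H₁ →L[ℝ] H₂} (hΦ : ‖Φ‖ ≤ 1) (t : H₁ ⊗[ℝ] H₂) :
    |contractionPairing Φ t| ≤ contractionSeminorm H₁ H₂ t := by
  rw [contractionSeminorm_apply]
  exact le_ciSup (bddAbove_range_abs_contractionPairing t) ⟨Φ, mem_closedBall_zero_iff.2 hΦ⟩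

theorem contractionSeminorm_tmul_le (x : H₁) (y : H₂) :
    contractionSeminorm H₁ H₂ (x ⊗ₜ y) ≤ ‖x‖ * ‖y‖ := by
  rw [contractionSeminorm_apply]
  have : Nonempty (Metric.closedBall (0 : H₁ →L[ℝ] H₂) 1) := ⟨⟨0, by simp⟩⟩
  exact ciSup_le fun Φ => by
    simpa using (Φ : H₁ →L[ℝ] H₂).abs_inner_le_of_norm_le_one (mem_closedBall_zero_iff.1 Φ.2) x y

theorem contractionSeminorm_sum_smul_tmul {ι : Type*} [Fintype ι] (α : ι → ℝ) (u : ι → H₁)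
    (v : ι → H₂) :
    contractionSeminorm H₁ H₂ (∑ j, α j • u j ⊗ₜ v j) =
      sSup {s : ℝ | ∃ Φ : H₁ →L[ℝ] H₂, ‖Φ‖ ≤ 1 ∧ s = |∑ j, α j * ⟪Φ (u j), v j⟫|} := by
  rw [contractionSeminorm_apply, iSup]
  congr 1
  ext s
  simp [eq_comm]

theorem exists_contraction_inner_eq_of_le_contractionSeminorm [CompleteSpace H₂] {D : Type*}
    (u : D → H₁) (v : D → H₂) (c : D → ℝ)
    (h : ∀ (n : ℕ) (d : Fin n → D) (α : Fin n → ℝ),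
      |∑ j, α j * c (d j)| ≤ contractionSeminorm H₁ H₂ (∑ j, α j • u (d j) ⊗ₜ v (d j))) :
    ∃ Φ : H₁ →L[ℝ] H₂, ‖Φ‖ ≤ 1 ∧ ∀ d, ⟪Φ (u d), v d⟫ = c d := by
  obtain ⟨G, hGc, hG⟩ := (contractionSeminorm H₁ H₂).exists_comp_eq_of_abs_le
    (Finsupp.linearCombination ℝ fun d => u d ⊗ₜ[ℝ] v d) (Finsupp.linearCombination ℝ c)
    fun m => by
      set e := m.support.equivFin
      have key := h _ (fun j => (e.symm j : D)) fun j => m (e.symm j)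
      rw [e.symm.sum_comp (fun i : m.support => m i * c i),
        e.symm.sum_comp (fun i : m.support => m i • u i ⊗ₜ v i)] at key
      simp only [Finsupp.linearCombination_apply, Finsupp.sum, smul_eq_mul]
      rwa [← m.support.sum_coe_sort, ← m.support.sum_coe_sort]
  obtain ⟨Φ, hΦ, hΦG⟩ := exists_contraction_inner_eq_of_abs_le
    ((TensorProduct.mk ℝ H₁ H₂).compr₂ G) fun x y => (hG _).trans (contractionSeminorm_tmul_le x y)
  refine ⟨Φ, hΦ, fun d => ?_⟩
  simpa [hΦG] using LinearMap.congr_fun hGc (Finsupp.single d 1)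

theorem exists_contraction_inner_comp_eq [CompleteSpace H₂] {M N : Type*} [AddCommGroup M]
    [Module ℝ M] [FiniteDimensional ℝ M] [AddCommGroup N] [Module ℝ N] [FiniteDimensional ℝ N]
    (A : M →ₗ[ℝ] H₁) (B : N →ₗ[ℝ] H₂) (C : M →ₗ[ℝ] N →ₗ[ℝ] ℝ)
    (hC : ∀ a b, |C a b| ≤ ‖A a‖ * ‖B b‖) :
    ∃ Φ : H₁ →L[ℝ] H₂, ‖Φ‖ ≤ 1 ∧ ∀ a b, ⟪Φ (A a), B b⟫ = C a b := by
  obtain ⟨σ₁, hσ₁⟩ := A.rangeRestrict.exists_rightInverse_of_surjective A.range_rangeRestrict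
  obtain ⟨σ₂, hσ₂⟩ := B.rangeRestrict.exists_rightInverse_of_surjective B.range_rangeRestrict
  have hAσ : ∀ x, A (σ₁ x) = x := fun x => congrArg Subtype.val (LinearMap.congr_fun hσ₁ x)
  have hBσ : ∀ y, B (σ₂ y) = y := fun y => congrArg Subtype.val (LinearMap.congr_fun hσ₂ y)
  have hCA : ∀ a a' b, A a = A a' → C a b = C a' b := fun a a' b h => by
    simpa [h, sub_eq_zero] using hC (a - a') b
  have hCB : ∀ a b b', B b = B b' → C a b = C a b' := fun a b b' h => by
    simpa [h, sub_eq_zero] using hC a (b - b')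
  -- `σ₁ ∘ P₁` and `σ₂ ∘ P₂` pick preimages of the projections; `C` does not see the choice.
  let P₁ := (LinearMap.range A).orthogonalProjectionOnto
  let P₂ := (LinearMap.range B).orthogonalProjectionOnto
  obtain ⟨Φ, hΦ, hΦC⟩ := exists_contraction_inner_eq_of_abs_le
    (C.compl₁₂ (σ₁ ∘ₗ P₁.toLinearMap) (σ₂ ∘ₗ P₂.toLinearMap)) fun x y => by
      calc _ ≤ ‖A (σ₁ (P₁ x))‖ * ‖B (σ₂ (P₂ y))‖ := hC _ _
        _ ≤ ‖x‖ * ‖y‖ := by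
          rw [hAσ, hBσ]
          exact mul_le_mul (Submodule.norm_orthogonalProjectionOnto_apply_le _ x)
            (Submodule.norm_orthogonalProjectionOnto_apply_le _ y) (norm_nonneg _) (norm_nonneg _)
  refine ⟨Φ, hΦ, fun a b => ?_⟩
  have hPA : P₁ (A a) = ⟨A a, LinearMap.mem_range_self A a⟩ :=
    Submodule.orthogonalProjectionOnto_mem_subspace_eq_self ⟨A a, _⟩
  have hPB : P₂ (B b) = ⟨B b, LinearMap.mem_range_self B b⟩ :=
    Submodule.orthogonalProjectionOnto_mem_subspace_eq_self ⟨B b, _⟩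
  simp only [hΦC, LinearMap.compl₁₂_apply, LinearMap.comp_apply, ContinuousLinearMap.coe_coe,
    hPA, hPB]
  exact (hCA _ _ _ (hAσ _)).trans (hCB _ _ _ (hBσ _))

section Kernels

variable {X : Type*} {K : X → X → ℝ}

theorem IsKernel.append_nonneg (hK : IsKernel K) {m n : ℕ} (x : Fin m → X) (y : Fin n → X)
    (a : Fin m → ℝ) (b : Fin n → ℝ) :
    0 ≤ ∑ i, ∑ j, a i * a j * K (x i) (x j) + 2 * ∑ i, ∑ j, a i * b j * K (x i) (y j)
      + ∑ i, ∑ j, b i * b j * K (y i) (y j) := by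
  have h := hK.2 _ (Fin.append a b) (Fin.append x y)
  simp only [Fin.sum_univ_add, Fin.append_left, Fin.append_right, Finset.sum_add_distrib] at h
  have hswap : ∑ i, ∑ j, b i * a j * K (y i) (x j) = ∑ i, ∑ j, a i * b j * K (x i) (y j) := by
    rw [Finset.sum_comm]
    exact Finset.sum_congr rfl fun i _ => Finset.sum_congr rfl fun j _ => by rw [hK.1]; ring
  linarith

theorem IsKernel.abs_sum_le_norm_mul_norm (hK : IsKernel K) {m n : ℕ} (x : Fin m → X)
    (y : Fin n → X) (u : Fin m → H₁) (v : Fin n → H₂)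
    (hu : ∀ i j, K (x i) (x j) = ⟪u i, u j⟫) (hv : ∀ i j, K (y i) (y j) = ⟪v i, v j⟫)
    (a : Fin m → ℝ) (b : Fin n → ℝ) :
    |∑ i, ∑ j, a i * b j * K (x i) (y j)| ≤ ‖∑ i, a i • u i‖ * ‖∑ j, b j • v j‖ := by
  have hquad : ∀ t : ℝ, 0 ≤ ‖∑ i, a i • u i‖ ^ 2 * (t * t)
      + 2 * (∑ i, ∑ j, a i * b j * K (x i) (y j)) * t + ‖∑ j, b j • v j‖ ^ 2 := by
    intro t
    have h := hK.append_nonneg x y (t • a) b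
    simp only [hu, hv, sum_sum_mul_inner_eq_inner_sum, real_inner_self_eq_norm_sq] at h
    simp only [Pi.smul_apply, smul_eq_mul, mul_smul, ← Finset.smul_sum, norm_smul,
      Real.norm_eq_abs, mul_pow, sq_abs, mul_assoc, ← Finset.mul_sum] at h ⊢
    linarith
  have hdisc := discrim_le_zero hquad
  rw [discrim] at hdisc
  exact abs_le_of_sq_le_sq (by nlinarith) (by positivity)

theorem IsKernel.exists_contraction_inner_eq [CompleteSpace H₂] (hK : IsKernel K) {m n : ℕ}
    (x : Fin m → X) (y : Fin n → X) (u : Fin m → H₁) (v : Fin n → H₂)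
    (hu : ∀ i j, K (x i) (x j) = ⟪u i, u j⟫) (hv : ∀ i j, K (y i) (y j) = ⟪v i, v j⟫) :
    ∃ Φ : H₁ →L[ℝ] H₂, ‖Φ‖ ≤ 1 ∧ ∀ i j, ⟪Φ (u i), v j⟫ = K (x i) (y j) := by
  obtain ⟨Φ, hΦ, hΦC⟩ := exists_contraction_inner_comp_eq (Fintype.linearCombination ℝ u)
    (Fintype.linearCombination ℝ v) (Matrix.toLinearMap₂' ℝ (Matrix.of fun i j => K (x i) (y j)))
    fun a b => by
      simpa [Fintype.linearCombination_apply, Matrix.toLinearMap₂'_apply, mul_assoc] using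
        hK.abs_sum_le_norm_mul_norm x y u v hu hv a b
  refine ⟨Φ, hΦ, fun i j => ?_⟩
  simpa [Matrix.toLinearMap₂'_apply, Pi.single_apply] using hΦC (Pi.single i 1) (Pi.single j 1)

end Kernels

section BlockKernel

variable {X : Type*}

def blockKernel (f : X → H₁) (g : X → H₂) (Φ : H₁ →L[ℝ] H₂) (x y : X) : ℝ :=
  ⟪f x, f y⟫ + ⟪g x, g y⟫ + ⟪Φ (f x), g y⟫ + ⟪Φ (f y), g x⟫

theorem isKernel_blockKernel (f : X → H₁) (g : X → H₂) {Φ : H₁ →L[ℝ] H₂} (hΦ : ‖Φ‖ ≤ 1) :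
    IsKernel (blockKernel f g Φ) := by
  refine ⟨fun x y => ?_, fun n a x => ?_⟩
  · simp only [blockKernel, real_inner_comm (f x), real_inner_comm (g x)]
    ring
  set U := ∑ i, a i • f (x i)
  set V := ∑ i, a i • g (x i)
  have hΦU : Φ U = ∑ i, a i • Φ (f (x i)) := by simp [U, map_sum]
  have hcross : ∑ i, ∑ j, a i * a j * ⟪Φ (f (x j)), g (x i)⟫ = ⟪Φ U, V⟫ := by
    rw [Finset.sum_comm, hΦU, ← sum_sum_mul_inner_eq_inner_sum]
    exact Finset.sum_congr rfl fun i _ => Finset.sum_congr rfl fun j _ => by ring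
  have hexpand : ∑ i, ∑ j, a i * a j * blockKernel f g Φ (x i) (x j)
      = ‖U‖ ^ 2 + ‖V‖ ^ 2 + 2 * ⟪Φ U, V⟫ := by
    simp only [blockKernel, mul_add, Finset.sum_add_distrib, hcross,
      sum_sum_mul_inner_eq_inner_sum, ← hΦU, real_inner_self_eq_norm_sq]
    ring
  rw [hexpand]
  nlinarith [abs_le.1 (Φ.abs_inner_le_of_norm_le_one hΦ U V), sq_nonneg (‖U‖ - ‖V‖)]

open Classical in
theorem isCompletion_blockKernel {X₁ X₂ : Set X} (hcover : X₁ ∪ X₂ = Set.univ)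
    (hdisj : Disjoint X₁ X₂) {Ω : Set (X × X)} (hΩ : IsCompletionDomain Ω) {KΩ : X → X → ℝ}
    (hsymm : ∀ u v, (u, v) ∈ Ω → KΩ u v = KΩ v u)
    (k₁ : X₁ → H₁) (hk₁ : ∀ u v : X₁, ⟪k₁ u, k₁ v⟫ = KΩ u v)
    (k₂ : X₂ → H₂) (hk₂ : ∀ u v : X₂, ⟪k₂ u, k₂ v⟫ = KΩ u v)
    {Φ : H₁ →L[ℝ] H₂} (hΦ : ‖Φ‖ ≤ 1)
    (hΦK : ∀ x y (hx : x ∈ X₁) (hy : y ∈ X₂), (x, y) ∈ Ω → ⟪Φ (k₁ ⟨x, hx⟩), k₂ ⟨y, hy⟩⟫ = KΩ x y) :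
    IsCompletion Ω KΩ (blockKernel (fun x => if h : x ∈ X₁ then k₁ ⟨x, h⟩ else 0)
      (fun x => if h : x ∈ X₂ then k₂ ⟨x, h⟩ else 0) Φ) := by
  refine ⟨isKernel_blockKernel _ _ hΦ, fun x y hxy => ?_⟩
  have hmem : ∀ z, z ∈ X₁ ∨ z ∈ X₂ := Set.eq_univ_iff_forall.1 hcover
  rcases hmem x with hx | hx <;> rcases hmem y with hy | hy
  · simp [blockKernel, hx, hy, Set.disjoint_left.1 hdisj hx, Set.disjoint_left.1 hdisj hy, hk₁]
  · simp [blockKernel, hx, hy, Set.disjoint_left.1 hdisj hx, Set.disjoint_right.1 hdisj hy,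
      hΦK x y hx hy hxy]
  · simp [blockKernel, hx, hy, Set.disjoint_right.1 hdisj hx, Set.disjoint_left.1 hdisj hy,
      hΦK y x hy hx ((hΩ.1 x y).1 hxy), hsymm y x ((hΩ.1 x y).1 hxy)]
  · simp [blockKernel, hx, hy, Set.disjoint_right.1 hdisj hx, Set.disjoint_right.1 hdisj hy, hk₂]

end BlockKernel

end Contractions

theorem completion_exists_iff_tensor_bound_general {X H₁ H₂ : Type*}
    [NormedAddCommGroup H₁] [InnerProductSpace ℝ H₁]
    [NormedAddCommGroup H₂] [InnerProductSpace ℝ H₂] [CompleteSpace H₂]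
    (X₁ X₂ : Set X) (hcover : X₁ ∪ X₂ = Set.univ) (hdisj : Disjoint X₁ X₂)
    (Ω : Set (X × X)) (hΩ : IsCompletionDomain Ω)
    (hsq₁ : X₁ ×ˢ X₁ ⊆ Ω) (hsq₂ : X₂ ×ˢ X₂ ⊆ Ω)
    (KΩ : X → X → ℝ) (hsymm : ∀ u v, (u, v) ∈ Ω → KΩ u v = KΩ v u)
    (k₁ : X₁ → H₁) (hk₁ : ∀ u v : X₁, ⟪k₁ u, k₁ v⟫ = KΩ u v)
    (k₂ : X₂ → H₂) (hk₂ : ∀ u v : X₂, ⟪k₂ u, k₂ v⟫ = KΩ u v) :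
    (∃ K : X → X → ℝ, IsCompletion Ω KΩ K) ↔
      ∀ (n : ℕ) (xs ys : Fin n → X) (hx : ∀ j, xs j ∈ X₁) (hy : ∀ j, ys j ∈ X₂),
        (∀ j, (xs j, ys j) ∈ Ω) → ∀ α : Fin n → ℝ,
        |∑ j, α j * KΩ (xs j) (ys j)| ≤
          sSup {s : ℝ | ∃ Φ : H₁ →L[ℝ] H₂, ‖Φ‖ ≤ 1 ∧
            s = |∑ j, α j * ⟪Φ (k₁ ⟨xs j, hx j⟩), k₂ ⟨ys j, hy j⟩⟫|} := by
  constructor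
  · rintro ⟨K, hK, hKΩ⟩ n xs ys hx hy hΩxy α
    obtain ⟨Φ, hΦ, hΦK⟩ := hK.exists_contraction_inner_eq xs ys (fun j => k₁ ⟨xs j, hx j⟩)
      (fun j => k₂ ⟨ys j, hy j⟩) (fun i j => by rw [hKΩ _ _ (hsq₁ ⟨hx i, hx j⟩), hk₁])
      (fun i j => by rw [hKΩ _ _ (hsq₂ ⟨hy i, hy j⟩), hk₂])
    rw [← contractionSeminorm_sum_smul_tmul]
    calc |∑ j, α j * KΩ (xs j) (ys j)|
        = |contractionPairing Φ (∑ j, α j • k₁ ⟨xs j, hx j⟩ ⊗ₜ k₂ ⟨ys j, hy j⟩)| := by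
          simp [map_sum, hΦK, hKΩ _ _ (hΩxy _)]
      _ ≤ _ := abs_contractionPairing_le hΦ _
  · intro h
    obtain ⟨Φ, hΦ, hΦK⟩ := exists_contraction_inner_eq_of_le_contractionSeminorm
      (D := ↥(Ω ∩ X₁ ×ˢ X₂)) (fun d => k₁ ⟨d.1.1, d.2.2.1⟩) (fun d => k₂ ⟨d.1.2, d.2.2.2⟩)
      (fun d => KΩ d.1.1 d.1.2) fun n d α => by
        simpa [contractionSeminorm_sum_smul_tmul] using h n (fun j => (d j).1.1)
          (fun j => (d j).1.2) (fun j => (d j).2.2.1) (fun j => (d j).2.2.2) (fun j => (d j).2.1) α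
    exact ⟨_, isCompletion_blockKernel hcover hdisj hΩ hsymm k₁ hk₁ k₂ hk₂ hΦ
      fun x y hx hy hxy => hΦK ⟨(x, y), hxy, hx, hy⟩⟩

/-- Existence criterion for completion on a large domain: `KΩ` admits a completion iff
for every finite family of points of `Δ = Ω ∩ (X₁ × X₂)` and coefficients `α`, the pairing
with `KΩ` is dominated by the projective tensor norm, expressed via the duality formula as a
supremum over contractions `Φ : H₁ → H₂`. -/
theorem completion_exists_iff_tensor_bound {X H₁ H₂ : Type*}
    [NormedAddCommGroup H₁] [InnerProductSpace ℝ H₁] [CompleteSpace H₁]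
    [NormedAddCommGroup H₂] [InnerProductSpace ℝ H₂] [CompleteSpace H₂]
    (X₁ X₂ : Set X) (hcover : X₁ ∪ X₂ = Set.univ) (hdisj : Disjoint X₁ X₂)
    (Ω : Set (X × X)) (hΩ : IsCompletionDomain Ω)
    (hsq₁ : X₁ ×ˢ X₁ ⊆ Ω) (hsq₂ : X₂ ×ˢ X₂ ⊆ Ω)
    (KΩ : X → X → ℝ) (hsymm : ∀ u v, (u, v) ∈ Ω → KΩ u v = KΩ v u)
    (hker₁ : IsKernel (fun a b : X₁ => KΩ a b))
    (hker₂ : IsKernel (fun a b : X₂ => KΩ a b))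
    (k₁ : X₁ → H₁) (hk₁ : ∀ u v : X₁, ⟪k₁ u, k₁ v⟫ = KΩ u v)
    (hd₁ : Dense (Submodule.span ℝ (Set.range k₁) : Set H₁))
    (k₂ : X₂ → H₂) (hk₂ : ∀ u v : X₂, ⟪k₂ u, k₂ v⟫ = KΩ u v)
    (hd₂ : Dense (Submodule.span ℝ (Set.range k₂) : Set H₂)) :
    (∃ K : X → X → ℝ, IsCompletion Ω KΩ K) ↔
      ∀ (n : ℕ) (xs ys : Fin n → X) (hx : ∀ j, xs j ∈ X₁) (hy : ∀ j, ys j ∈ X₂),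
        (∀ j, (xs j, ys j) ∈ Ω) → ∀ α : Fin n → ℝ,
        |∑ j, α j * KΩ (xs j) (ys j)| ≤
          sSup {s : ℝ | ∃ Φ : H₁ →L[ℝ] H₂, ‖Φ‖ ≤ 1 ∧
            s = |∑ j, α j * ⟪Φ (k₁ ⟨xs j, hx j⟩), k₂ ⟨ys j, hy j⟩⟫|} :=
  completion_exists_iff_tensor_bound_general X₁ X₂ hcover hdisj Ω hΩ hsq₁ hsq₂ KΩ hsymm k₁ hk₁ k₂
    hk₂
end
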